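/- arXiv:math/0010073 — 7 statements merged into one kernel-verified Lean document; each statement's English description precedes it below -/
import Mathlib

section
/- Let n ≤ m be positive integers and let K be a simplicial complex on the set [m] = {1,…,m} all of whose members have at most n elements. For 0 ≤ j ≤ n let f_{j−1} denote the number of members of K with exactly j elements (so f_{−1} = 1), and define integers h_0,…,h_n by h_k = Σ_{i=0}^{k} (−1)^{k−i}·binom(n−i, k−i)·f_{i−1}. For 0 ≤ p ≤ m set χ_p = Σ_{j=0}^{p} (−1)^{p−j}·f_{j−1}·binom(m−j, p−j). Then the following identity of polynomials in ℤ[t] holds: Σ_{p=0}^{m} χ_p·t^{2p} = (1 − t²)^{m−n}·(h_0 + h_1 t² + ⋯ + h_n t^{2n}). -/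
open Polynomial


lemma aux2 {R : Type*} [CommRing R] (t : R) (k L : ℕ) (hk : k < L) :
    ∑ q ∈ Finset.range L, (-1 : R) ^ q * (Nat.choose k q : R) * t ^ q = (1 - t) ^ k := by
  have h1 : (1 - t) ^ k = ∑ q ∈ Finset.range (k + 1),
      (-1 : R) ^ q * (Nat.choose k q : R) * t ^ q := by
    have := add_pow (-t) 1 k
    simp only [one_pow, mul_one] at this
    rw [show (1 : R) - t = -t + 1 by ring, this]
    apply Finset.sum_congr rfl
    intro q _
    rw [neg_pow]
    ring
  rw [h1]
  symm
  apply Finset.sum_subset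
  · intro x hx; simp only [Finset.mem_range] at *; omega
  · intro x _ hx
    simp only [Finset.mem_range, not_lt] at hx
    rw [Nat.choose_eq_zero_of_lt (by omega)]
    simp

lemma aux1 {R : Type*} [CommRing R] (a : ℕ → R) (N M : ℕ) (hNM : N ≤ M) (t : R) :
    ∑ p ∈ Finset.range (M + 1), (∑ j ∈ Finset.range (p + 1),
        (-1 : R) ^ (p - j) * a j * (Nat.choose (N - j) (p - j) : R)) * t ^ p
      = ∑ j ∈ Finset.range (M + 1), a j * t ^ j * (1 - t) ^ (N - j) := by
  simp only [Finset.sum_mul]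
  simp only [← Nat.Ico_zero_eq_range]; rw [← Finset.sum_Ico_Ico_comm]
  apply Finset.sum_congr rfl
  intro j hj
  simp only [Finset.mem_Ico] at hj
  rw [Finset.sum_Ico_eq_sum_range]
  have : ∀ q ∈ Finset.range (M + 1 - j),
      (-1 : R) ^ (j + q - j) * a j * (Nat.choose (N - j) (j + q - j) : R) * t ^ (j + q)
        = (a j * t ^ j) * ((-1 : R) ^ q * (Nat.choose (N - j) q : R) * t ^ q) := by
    intro q _
    rw [Nat.add_sub_cancel_left, pow_add]
    ring
  rw [Finset.sum_congr rfl this, ← Finset.mul_sum,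
    aux2 t (N - j) (M + 1 - j) (by omega)]

/-- Theorem (gpz): χ(Z_K; t) = (1 − t²)^{m−n} · (h₀ + h₁t² + ⋯ + hₙt^{2n}).
Here `f j` is the number of members of the simplicial complex `K` with exactly `j`
elements (so `f 0 = 1` corresponds to `f₋₁ = 1`), `h` is the `h`-vector and
`χ p = Σ_{j=0}^{p} (−1)^{p−j}·f_{j−1}·C(m−j, p−j)`. -/
theorem stmt0 (m n : ℕ) (hn : 1 ≤ n) (hnm : n ≤ m)
    (K : Finset (Finset (Fin m)))
    (hK : ∀ I ∈ K, ∀ J ⊆ I, J ∈ K) (hempty : ∅ ∈ K)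
    (hdim : ∀ I ∈ K, I.card ≤ n)
    (f : ℕ → ℤ)
    (hf : ∀ j, f j = ((K.filter (fun I => I.card = j)).card : ℤ))
    (h : ℕ → ℤ)
    (hh : ∀ k, h k = ∑ i ∈ Finset.range (k + 1),
      (-1 : ℤ) ^ (k - i) * (Nat.choose (n - i) (k - i) : ℤ) * f i)
    (χ : ℕ → ℤ)
    (hχ : ∀ p, χ p = ∑ j ∈ Finset.range (p + 1),
      (-1 : ℤ) ^ (p - j) * f j * (Nat.choose (m - j) (p - j) : ℤ)) :
    ∑ p ∈ Finset.range (m + 1), C (χ p) * X ^ (2 * p)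
      = (1 - X ^ 2) ^ (m - n) *
        ∑ k ∈ Finset.range (n + 1), C (h k) * X ^ (2 * k) := by
  have hf0 : ∀ j, n < j → f j = 0 := by
    intro j hj
    rw [hf]
    norm_cast
    rw [Finset.card_eq_zero, Finset.filter_eq_empty_iff]
    intro I hI hc
    exact absurd (hc ▸ hdim I hI) (not_le.mpr hj)
  have hL : ∑ p ∈ Finset.range (m + 1), C (χ p) * X ^ (2 * p)
      = ∑ j ∈ Finset.range (m + 1),
          C (f j) * (X ^ 2) ^ j * (1 - X ^ 2) ^ (m - j) := by
    rw [← aux1 (fun j => C (f j)) m m le_rfl ((X : ℤ[X]) ^ 2)]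
    apply Finset.sum_congr rfl
    intro p _
    rw [hχ, map_sum, pow_mul]
    congr 1
    apply Finset.sum_congr rfl
    intro j _
    simp only [map_mul, map_pow, map_neg, map_one, map_natCast]
  have hR : ∑ k ∈ Finset.range (n + 1), C (h k) * X ^ (2 * k)
      = ∑ j ∈ Finset.range (n + 1),
          C (f j) * (X ^ 2) ^ j * (1 - X ^ 2) ^ (n - j) := by
    rw [← aux1 (fun j => C (f j)) n n le_rfl ((X : ℤ[X]) ^ 2)]
    apply Finset.sum_congr rfl
    intro p _
    rw [hh, map_sum, pow_mul]
    congr 1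
    apply Finset.sum_congr rfl
    intro j _
    simp only [map_mul, map_pow, map_neg, map_one, map_natCast]
    ring
  rw [hL, hR, Finset.mul_sum]
  have hRR : ∀ j ∈ Finset.range (n + 1),
      (1 - X ^ 2) ^ (m - n) * (C (f j) * (X ^ 2) ^ j * (1 - X ^ 2) ^ (n - j))
        = C (f j) * (X ^ 2) ^ j * (1 - X ^ 2) ^ (m - j) := by
    intro j hj
    simp only [Finset.mem_range] at hj
    rw [show m - j = (m - n) + (n - j) by omega, pow_add]
    ring
  rw [Finset.sum_congr rfl hRR]
  symm
  apply Finset.sum_subset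
  · exact Finset.range_subset_range.mpr (by omega)
  · intro j _ hj
    simp only [Finset.mem_range, not_lt] at hj
    rw [hf0 j (by omega)]
    simp
end

section
/- Let n ≤ m be positive integers and let K be a simplicial complex on the set [m] all of whose members have at most n elements; let f_{j−1} be the number of j-element members of K (f_{−1} = 1), let h_k = Σ_{i=0}^{k} (−1)^{k−i}·binom(n−i, k−i)·f_{i−1} for 0 ≤ k ≤ n, and let χ(K) = Σ_{s=1}^{n} (−1)^{s−1} f_{s−1} be the Euler characteristic of K. For 0 ≤ r ≤ m set χ_r = Σ (−1)^{j+p}·f_{i+j+l−1}·binom(i+j+l, i)·binom(j+l, l)·binom(m−i−j−l, p), the sum being over all nonnegative integers i, j, l, p with i + p = r and l ≥ 1. Then the following identity of polynomials in ℤ[t] holds: Σ_{r=0}^{m} χ_r·t^{2r} = (1−t²)^{m−n}·(h_0 + h_1 t² + ⋯ + h_n t^{2n}) + (χ(K) − 1)·(1−t²)^m. -/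
/-!
Write `y = t²`. Summing out `p` turns `C(m−i−j−l, p)` into `(1 − y)^(m−i−j−l)`, and summing
over `j` and `l ≥ 1` with `s = j + l` fixed leaves only the sign `−(−1)^s`, because
`Σ_{j ≤ s} (−1)^j C(s, j)` vanishes for `s ≥ 1`. What remains is
`Σ_q f_q (1 − y)^(m−q) (y^q − (y − 1)^q)`: the `y^q` part is `(1 − y)^(m−n)` times the
`h`-polynomial `Σ_q f_q y^q (1 − y)^(n−q)`, and the `(y − 1)^q` part is
`(Σ_q (−1)^q f_q) (1 − y)^m = (1 − χ(K)) (1 − y)^m`.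
-/

open Polynomial Finset

theorem sum_range_succ_eq_add_sum_Icc_one {M : Type*} [AddCommMonoid M] (g : ℕ → M) (n : ℕ) :
    ∑ k ∈ range (n + 1), g k = g 0 + ∑ k ∈ Icc 1 n, g k := by
  rw [range_eq_Ico, sum_eq_sum_Ico_succ_bot (by omega : 0 < n + 1), Ico_add_one_right_eq_Icc]

theorem sum_range_sum_range_eq_sum_range_sum_range_sub {M : Type*} [AddCommMonoid M]
    {N A B : ℕ} (hA : N ≤ A) (hB : N ≤ B) (G : ℕ → ℕ → M)
    (hG : ∀ a b, N < a + b → G a b = 0) :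
    ∑ a ∈ range (A + 1), ∑ b ∈ range (B + 1), G a b
      = ∑ s ∈ range (N + 1), ∑ a ∈ range (s + 1), G a (s - a) := by
  rw [sum_range_diag_flip]
  have inner :
      ∀ a, ∑ b ∈ range (B + 1), G a b = ∑ b ∈ range (N + 1 - a), G a b := fun a =>
    (sum_subset (range_subset_range.mpr (by omega)) fun b _ hb =>
      hG a b (by simp only [mem_range] at hb; omega)).symm
  simp only [inner]
  refine (sum_subset (range_subset_range.mpr (by omega)) fun a _ ha => ?_).symm
  exact sum_eq_zero fun b _ => hG a b (by simp only [mem_range] at ha; omega)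

section CommRing

variable {R : Type*} [CommRing R]

theorem sum_range_choose_mul_neg_pow_of_lt {N M : ℕ} (h : N < M) (y : R) :
    ∑ p ∈ range M, (N.choose p : R) * (-y) ^ p = (1 - y) ^ N := by
  rw [sub_eq_neg_add, add_pow, ← sum_subset (range_subset_range.mpr h) fun p _ hp =>
    by rw [Nat.choose_eq_zero_of_lt (by simp only [mem_range] at hp; omega), Nat.cast_zero,
      zero_mul]]
  exact sum_congr rfl fun p _ => by ring

theorem sum_range_neg_one_pow_mul_choose (s : ℕ) :
    ∑ j ∈ range (s + 1), (-1 : R) ^ j * (s.choose j : R) = if s = 0 then 1 else 0 := by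
  have h := (add_pow (-1 : R) 1 s).symm
  simp only [one_pow, mul_one, neg_add_cancel, zero_pow_eq] at h
  exact h

theorem sum_range_sum_Icc_neg_one_pow_mul_choose {M : ℕ} (φ : ℕ → R)
    (hφ : ∀ s, M < s → φ s = 0) :
    ∑ j ∈ range (M + 1), ∑ l ∈ Icc 1 M, (-1) ^ j * ((j + l).choose l : R) * φ (j + l)
      = φ 0 - ∑ s ∈ range (M + 1), (-1) ^ s * φ s := by
  have full : ∑ j ∈ range (M + 1), ∑ l ∈ range (M + 1),
      (-1) ^ j * ((j + l).choose l : R) * φ (j + l) = φ 0 := by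
    rw [sum_range_sum_range_eq_sum_range_sum_range_sub le_rfl le_rfl _
      fun j l h => by rw [hφ _ h, mul_zero]]
    calc ∑ s ∈ range (M + 1), ∑ j ∈ range (s + 1),
          (-1) ^ j * ((j + (s - j)).choose (s - j) : R) * φ (j + (s - j))
        = ∑ s ∈ range (M + 1), (if s = 0 then 1 else 0) * φ s := by
          refine sum_congr rfl fun s _ => ?_
          rw [← sum_range_neg_one_pow_mul_choose, sum_mul]
          refine sum_congr rfl fun j hj => ?_
          have hjs : j ≤ s := Nat.lt_succ_iff.mp (mem_range.mp hj)
          rw [Nat.add_sub_cancel' hjs, Nat.choose_symm hjs]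
      _ = φ 0 := by simp
  have split_l_zero : ∀ j, ∑ l ∈ range (M + 1), (-1) ^ j * ((j + l).choose l : R) * φ (j + l)
      = (-1) ^ j * φ j + ∑ l ∈ Icc 1 M, (-1) ^ j * ((j + l).choose l : R) * φ (j + l) := by
    intro j
    rw [sum_range_succ_eq_add_sum_Icc_one]
    simp
  rw [sum_congr rfl fun j _ => split_l_zero j, sum_add_distrib] at full
  linear_combination full

/-- `f q` stands for the paper's `f_{q-1}`, the number of faces with `q` vertices. -/
def momentAngleEulerCoeff (m : ℕ) (f : ℕ → R) (r : ℕ) : R :=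
  ∑ i ∈ range (r + 1), ∑ j ∈ range (m + 1), ∑ l ∈ Icc 1 m,
    (-1) ^ (j + (r - i)) * f (i + j + l) * ((i + j + l).choose i : R)
      * ((j + l).choose l : R) * ((m - i - j - l).choose (r - i) : R)

def hVector (n : ℕ) (f : ℕ → R) (k : ℕ) : R :=
  ∑ i ∈ range (k + 1), (-1) ^ (k - i) * ((n - i).choose (k - i) : R) * f i

theorem sum_momentAngleEulerCoeff_mul_pow (m : ℕ) (f : ℕ → R) (y : R) :
    ∑ r ∈ range (m + 1), momentAngleEulerCoeff m f r * y ^ r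
      = ∑ i ∈ range (m + 1), ∑ j ∈ range (m + 1), ∑ l ∈ Icc 1 m,
          (-1) ^ j * ((j + l).choose l : R)
            * (f (i + (j + l)) * ((i + (j + l)).choose i : R) * y ^ i
              * (1 - y) ^ (m - (i + (j + l)))) := by
  set T : ℕ → ℕ → R := fun i p => ∑ j ∈ range (m + 1), ∑ l ∈ Icc 1 m,
    (-1) ^ (j + p) * f (i + j + l) * ((i + j + l).choose i : R)
      * ((j + l).choose l : R) * ((m - i - j - l).choose p : R) * (y ^ i * y ^ p)
  calc ∑ r ∈ range (m + 1), momentAngleEulerCoeff m f r * y ^ r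
      = ∑ r ∈ range (m + 1), ∑ i ∈ range (r + 1), T i (r - i) := by
        refine sum_congr rfl fun r _ => ?_
        rw [momentAngleEulerCoeff, sum_mul]
        refine sum_congr rfl fun i hi => ?_
        simp only [T, ← pow_add, Nat.add_sub_cancel' (Nat.lt_succ_iff.mp (mem_range.mp hi)),
          sum_mul]
    _ = ∑ i ∈ range (m + 1), ∑ p ∈ range (m + 1 - i), T i p := sum_range_diag_flip _ _
    _ = _ := by
        refine sum_congr rfl fun i hi => ?_
        have him : i ≤ m := Nat.lt_succ_iff.mp (mem_range.mp hi)
        simp only [T]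
        rw [sum_comm]
        refine sum_congr rfl fun j _ => ?_
        rw [sum_comm]
        refine sum_congr rfl fun l _ => ?_
        rw [← add_assoc, show m - (i + j + l) = m - i - j - l by omega,
          ← sum_range_choose_mul_neg_pow_of_lt (show m - i - j - l < m + 1 - i by omega)]
        simp only [mul_sum]
        refine sum_congr rfl fun p _ => ?_
        rw [neg_pow]
        ring

theorem sum_mul_pow_mul_one_sub_pow_eq_sum_hVector (n : ℕ) (f : ℕ → R) (y : R) :
    ∑ i ∈ range (n + 1), f i * y ^ i * (1 - y) ^ (n - i)
      = ∑ k ∈ range (n + 1), hVector n f k * y ^ k := by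
  calc ∑ i ∈ range (n + 1), f i * y ^ i * (1 - y) ^ (n - i)
      = ∑ i ∈ range (n + 1), ∑ d ∈ range (n + 1 - i),
          (-1) ^ d * ((n - i).choose d : R) * f i * y ^ (i + d) := by
        refine sum_congr rfl fun i hi => ?_
        rw [← sum_range_choose_mul_neg_pow_of_lt
          (show n - i < n + 1 - i by have := mem_range.mp hi; omega), mul_sum]
        refine sum_congr rfl fun d _ => ?_
        rw [neg_pow, pow_add]
        ring
    _ = ∑ k ∈ range (n + 1), ∑ i ∈ range (k + 1),
          (-1) ^ (k - i) * ((n - i).choose (k - i) : R) * f i * y ^ (i + (k - i)) :=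
        (sum_range_diag_flip _ _).symm
    _ = ∑ k ∈ range (n + 1), hVector n f k * y ^ k := by
        refine sum_congr rfl fun k _ => ?_
        rw [hVector, sum_mul]
        refine sum_congr rfl fun i hi => ?_
        rw [Nat.add_sub_cancel' (Nat.lt_succ_iff.mp (mem_range.mp hi))]

theorem sum_range_neg_one_pow_mul (n : ℕ) (f : ℕ → R) :
    ∑ q ∈ range (n + 1), (-1) ^ q * f q = f 0 - ∑ s ∈ Icc 1 n, (-1) ^ (s - 1) * f s := by
  rw [sum_range_succ_eq_add_sum_Icc_one, pow_zero, one_mul, sub_eq_add_neg, ← sum_neg_distrib]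
  congr 1
  refine sum_congr rfl fun s hs => ?_
  obtain ⟨t, rfl⟩ := Nat.exists_eq_add_of_le' (mem_Icc.mp hs).1
  rw [Nat.add_sub_cancel, pow_succ]
  ring

theorem sum_momentAngleEulerCoeff_mul_pow_eq {m n : ℕ} (hnm : n ≤ m) (f : ℕ → R)
    (hf0 : f 0 = 1) (hfn : ∀ q, n < q → f q = 0) (y : R) :
    ∑ r ∈ range (m + 1), momentAngleEulerCoeff m f r * y ^ r
      = (1 - y) ^ (m - n) * ∑ k ∈ range (n + 1), hVector n f k * y ^ k
        + ((∑ s ∈ Icc 1 n, (-1) ^ (s - 1) * f s) - 1) * (1 - y) ^ m := by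
  set φ : ℕ → ℕ → R := fun i s =>
    f (i + s) * ((i + s).choose i : R) * y ^ i * (1 - y) ^ (m - (i + s))
  have hφ : ∀ i s, n < i + s → φ i s = 0 := fun i s h => by simp only [φ, hfn _ h, zero_mul]
  have faces : ∑ i ∈ range (m + 1), φ i 0
      = (1 - y) ^ (m - n) * ∑ k ∈ range (n + 1), hVector n f k * y ^ k := by
    rw [← sum_mul_pow_mul_one_sub_pow_eq_sum_hVector, mul_sum,
      ← sum_subset (range_subset_range.mpr (by omega : n + 1 ≤ m + 1))
        fun i _ hi => hφ i 0 (by simp only [mem_range] at hi; omega)]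
    refine sum_congr rfl fun i hi => ?_
    have hin : i ≤ n := Nat.lt_succ_iff.mp (mem_range.mp hi)
    simp only [φ, add_zero, Nat.choose_self, Nat.cast_one, mul_one]
    rw [show m - i = (m - n) + (n - i) by omega, pow_add]
    ring
  have signed : ∑ i ∈ range (m + 1), ∑ s ∈ range (m + 1), (-1) ^ s * φ i s
      = (∑ q ∈ range (n + 1), (-1) ^ q * f q) * (1 - y) ^ m := by
    rw [sum_range_sum_range_eq_sum_range_sum_range_sub hnm hnm _
      fun i s h => by rw [hφ i s h, mul_zero], sum_mul]
    refine sum_congr rfl fun q hq => ?_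
    have hqm : q ≤ m := by have := mem_range.mp hq; omega
    calc ∑ i ∈ range (q + 1), (-1) ^ (q - i) * φ i (q - i)
        = f q * (1 - y) ^ (m - q)
            * ∑ i ∈ range (q + 1), y ^ i * (-1) ^ (q - i) * (q.choose i : R) := by
          rw [mul_sum]
          refine sum_congr rfl fun i hi => ?_
          simp only [φ, Nat.add_sub_cancel' (Nat.lt_succ_iff.mp (mem_range.mp hi))]
          ring
      _ = f q * ((y - 1) ^ q * (1 - y) ^ (m - q)) := by rw [sub_eq_add_neg y, add_pow]; ring
      _ = (-1) ^ q * f q * (1 - y) ^ m := by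
          rw [show y - 1 = -(1 - y) by ring, neg_pow, mul_assoc, ← pow_add,
            Nat.add_sub_cancel' hqm]
          ring
  rw [sum_momentAngleEulerCoeff_mul_pow,
    sum_congr rfl fun i _ => sum_range_sum_Icc_neg_one_pow_mul_choose (φ i)
      fun s hs => hφ i s (by omega),
    sum_sub_distrib, faces, signed, sum_range_neg_one_pow_mul, hf0]
  ring

end CommRing

theorem stmt1_general (m n : ℕ) (hnm : n ≤ m)
    (K : Finset (Finset (Fin m)))
    (hempty : ∅ ∈ K)
    (hdim : ∀ I ∈ K, I.card ≤ n)
    (f : ℕ → ℤ)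
    (hf : ∀ j, f j = ((K.filter (fun I => I.card = j)).card : ℤ))
    (h : ℕ → ℤ)
    (hh : ∀ k, h k = ∑ i ∈ Finset.range (k + 1),
      (-1 : ℤ) ^ (k - i) * (Nat.choose (n - i) (k - i) : ℤ) * f i)
    (χK : ℤ)
    (hχK : χK = ∑ s ∈ Finset.Icc 1 n, (-1 : ℤ) ^ (s - 1) * f s)
    (χ : ℕ → ℤ)
    (hχ : ∀ r, χ r = ∑ i ∈ Finset.range (r + 1), ∑ j ∈ Finset.range (m + 1),
      ∑ l ∈ Finset.Icc 1 m,
        (-1 : ℤ) ^ (j + (r - i)) * f (i + j + l) * (Nat.choose (i + j + l) i : ℤ)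
          * (Nat.choose (j + l) l : ℤ) * (Nat.choose (m - i - j - l) (r - i) : ℤ)) :
    ∑ r ∈ Finset.range (m + 1), C (χ r) * X ^ (2 * r)
      = (1 - X ^ 2) ^ (m - n) *
          (∑ k ∈ Finset.range (n + 1), C (h k) * X ^ (2 * k))
        + C (χK - 1) * (1 - X ^ 2) ^ m := by
  have hf0 : f 0 = 1 := by
    rw [hf, Nat.cast_eq_one, card_eq_one]
    exact ⟨∅, by ext I; simpa [card_eq_zero] using fun h : I = ∅ => h ▸ hempty⟩
  have hfn : ∀ q, n < q → f q = 0 := fun q hq => by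
    rw [hf, Nat.cast_eq_zero, card_eq_zero, filter_eq_empty_iff]
    exact fun I hI => (hdim I hI).trans_lt hq |>.ne
  have key := sum_momentAngleEulerCoeff_mul_pow_eq hnm (fun q => C (f q)) (by simp [hf0])
    (fun q hq => by simp [hfn q hq]) (X ^ 2)
  simp only [momentAngleEulerCoeff, hVector] at key
  simp only [hχ, hh, hχK, map_sum, map_mul, map_pow, map_neg, map_one, map_natCast,
    map_sub, pow_mul]
  exact key

/-- Theorem (chitwk): χ(W_K; t) = (1−t²)^{m−n}(h₀ + h₁t² + ⋯ + hₙt^{2n}) + (χ(K)−1)(1−t²)^m.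
Here `f j` is the number of members of `K` with exactly `j` elements, and
χ_r = Σ_{i+p=r, l≥1} (−1)^{j+p} f_{i+j+l−1} C(i+j+l,i) C(j+l,l) C(m−i−j−l,p).
The ranges `j ≤ m`, `1 ≤ l ≤ m` capture all nonzero terms since `f` vanishes
beyond `m ≥ n`. -/
theorem stmt1 (m n : ℕ) (hn : 1 ≤ n) (hnm : n ≤ m)
    (K : Finset (Finset (Fin m)))
    (hK : ∀ I ∈ K, ∀ J ⊆ I, J ∈ K) (hempty : ∅ ∈ K)
    (hdim : ∀ I ∈ K, I.card ≤ n)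
    (f : ℕ → ℤ)
    (hf : ∀ j, f j = ((K.filter (fun I => I.card = j)).card : ℤ))
    (h : ℕ → ℤ)
    (hh : ∀ k, h k = ∑ i ∈ Finset.range (k + 1),
      (-1 : ℤ) ^ (k - i) * (Nat.choose (n - i) (k - i) : ℤ) * f i)
    (χK : ℤ)
    (hχK : χK = ∑ s ∈ Finset.Icc 1 n, (-1 : ℤ) ^ (s - 1) * f s)
    (χ : ℕ → ℤ)
    (hχ : ∀ r, χ r = ∑ i ∈ Finset.range (r + 1), ∑ j ∈ Finset.range (m + 1),
      ∑ l ∈ Finset.Icc 1 m,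
        (-1 : ℤ) ^ (j + (r - i)) * f (i + j + l) * (Nat.choose (i + j + l) i : ℤ)
          * (Nat.choose (j + l) l : ℤ) * (Nat.choose (m - i - j - l) (r - i) : ℤ)) :
    ∑ r ∈ Finset.range (m + 1), C (χ r) * X ^ (2 * r)
      = (1 - X ^ 2) ^ (m - n) *
          (∑ k ∈ Finset.range (n + 1), C (h k) * X ^ (2 * k))
        + C (χK - 1) * (1 - X ^ 2) ^ m :=
  stmt1_general m n hnm K hempty hdim f hf h hh χK hχK χ hχ
end

section
/- Let K be a simplicial complex on the vertex set [m] = {1,…,m}. Let Z_K = {z ∈ ℂ^m : |z_i| ≤ 1 for all i, and {i : |z_i| < 1} ∈ K} and let U(K) = ℂ^m ∖ ⋃_{I ⊆ [m], I ∉ K} L_I, where L_I = {z ∈ ℂ^m : z_i = 0 for all i ∈ I}. Then Z_K ⊆ U(K), and there is an equivariant strong deformation retraction of U(K) onto Z_K: there exists a continuous map H : U(K) × [0,1] → U(K) such that H(z,0) = z for all z ∈ U(K), H(z,1) ∈ Z_K for all z ∈ U(K), H(z,t) = z for all z ∈ Z_K and t ∈ [0,1], and H(γ·z, t) = γ·H(z,t)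 for every γ = (γ_1,…,γ_m) ∈ ℂ^m with |γ_i| = 1 for all i, where γ·z denotes coordinatewise multiplication. -/
/-- The moment-angle complex of a simplicial complex `K` on `[m]`. -/
def momentAngleComplex (m : ℕ) (K : Set (Finset (Fin m))) : Set (Fin m → ℂ) :=
  {z | (∀ i, ‖z i‖ ≤ 1) ∧
       ∃ I ∈ K, {i | ‖z i‖ < 1} = (I : Set (Fin m))}

/-- The complement U(K) = ℂ^m ∖ ⋃_{I∉K} L_I of the coordinate subspace arrangement. -/
def coordComplement (m : ℕ) (K : Set (Finset (Fin m))) : Set (Fin m → ℂ) :=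
  Set.univ \ ⋃ I ∈ {I : Finset (Fin m) | I ∉ K}, {z : Fin m → ℂ | ∀ i ∈ I, z i = 0}

section Aux

open Finset

variable {m : ℕ}

/-- Clipped modulus of the `j`-th coordinate. -/
noncomputable def bco (z : Fin m → ℂ) (j : Fin m) : ℝ := min (‖z j‖) 1

/-- Minimum of the clipped moduli over the coordinates outside `F`. -/
noncomputable def qco (F : Finset (Fin m)) (z : Fin m → ℂ) : ℝ :=
  Finset.fold min 1 (bco z) Fᶜ

open Classical in
/-- The faces of `K` containing `i`. -/
noncomputable def facesAt (K : Set (Finset (Fin m))) (i : Fin m) : Finset (Finset (Fin m)) :=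
  Finset.univ.filter (fun F => F ∈ K ∧ i ∈ F)

/-- The maximal `qco F z` over faces containing `i`. -/
noncomputable def Qco (K : Set (Finset (Fin m))) (z : Fin m → ℂ) (i : Fin m) : ℝ :=
  Finset.fold max 0 (fun F => qco F z) (facesAt K i)

/-- The denominator of the scaling factor. -/
noncomputable def Dco (K : Set (Finset (Fin m))) (z : Fin m → ℂ) (i : Fin m) : ℝ :=
  max (‖z i‖) (Qco K z i)

/-- The homotopy. -/
noncomputable def Hco (K : Set (Finset (Fin m))) (p : (Fin m → ℂ) × ℝ) : Fin m → ℂ :=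
  fun i => p.1 i * (((1 - p.2) + p.2 * (Dco K p.1 i)⁻¹ : ℝ) : ℂ)

lemma bco_nonneg (z : Fin m → ℂ) (j : Fin m) : 0 ≤ bco z j :=
  le_min (norm_nonneg _) zero_le_one

lemma bco_le_one (z : Fin m → ℂ) (j : Fin m) : bco z j ≤ 1 := min_le_right _ _

lemma bco_pos {z : Fin m → ℂ} {j : Fin m} (h : z j ≠ 0) : 0 < bco z j :=
  lt_min (by simpa using h) zero_lt_one

lemma qco_le_one (F : Finset (Fin m)) (z : Fin m → ℂ) : qco F z ≤ 1 := by
  unfold qco; exact (Finset.fold_min_le _).2 (Or.inl le_rfl)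

lemma qco_le_bco {F : Finset (Fin m)} {z : Fin m → ℂ} {j : Fin m} (hj : j ∉ F) :
    qco F z ≤ bco z j := by
  unfold qco; exact (Finset.fold_min_le _).2 (Or.inr ⟨j, Finset.mem_compl.2 hj, le_rfl⟩)

lemma qco_pos {F : Finset (Fin m)} {z : Fin m → ℂ} (h : ∀ j ∉ F, z j ≠ 0) :
    0 < qco F z := by
  by_contra hc
  push_neg at hc
  unfold qco at hc
  rcases (Finset.fold_min_le _).1 hc with h1 | ⟨j, hj, hjle⟩
  · linarith
  · exact absurd hjle (not_le.2 (bco_pos (h j (Finset.mem_compl.1 hj))))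

lemma Qco_le_one (K : Set (Finset (Fin m))) (z : Fin m → ℂ) (i : Fin m) :
    Qco K z i ≤ 1 := by
  unfold Qco; exact (Finset.fold_max_le _).2 ⟨zero_le_one, fun F _ => qco_le_one F z⟩

lemma qco_le_Qco {K : Set (Finset (Fin m))} {z : Fin m → ℂ} {i : Fin m}
    {F : Finset (Fin m)} (hF : F ∈ K) (hi : i ∈ F) : qco F z ≤ Qco K z i := by
  classical
  unfold Qco
  refine (Finset.le_fold_max _).2 (Or.inr ⟨F, ?_, le_rfl⟩)
  simp [facesAt, hF, hi]

lemma abs_le_Dco (K : Set (Finset (Fin m))) (z : Fin m → ℂ) (i : Fin m) :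
    ‖z i‖ ≤ Dco K z i := le_max_left _ _

/-- Membership criterion for the coordinate subspace arrangement complement. -/
lemma mem_coordComplement {K : Set (Finset (Fin m))} {z : Fin m → ℂ} :
    z ∈ coordComplement m K ↔ ∀ I : Finset (Fin m), I ∉ K → ∃ i ∈ I, z i ≠ 0 := by
  simp only [coordComplement, Set.mem_diff, Set.mem_univ, true_and, Set.mem_iUnion,
    Set.mem_setOf_eq, not_exists]
  constructor
  · intro h I hI
    by_contra hc
    push_neg at hc
    exact h I hI hc
  · intro h I hI hall
    obtain ⟨i, hi, hne⟩ := h I hI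
    exact hne (hall i hi)

open Classical in
/-- The zero set of a point in `U(K)` is a face of `K`. -/
lemma zeroset_mem {K : Set (Finset (Fin m))} {z : Fin m → ℂ}
    (hz : z ∈ coordComplement m K) :
    (Finset.univ.filter (fun i => z i = 0)) ∈ K := by
  by_contra hc
  obtain ⟨i, hi, hne⟩ := mem_coordComplement.1 hz _ hc
  exact hne (by simpa using hi)

lemma Dco_pos {K : Set (Finset (Fin m))} {z : Fin m → ℂ}
    (hz : z ∈ coordComplement m K) (i : Fin m) : 0 < Dco K z i := by
  classical
  by_cases h : z i = 0
  · refine lt_of_lt_of_le ?_ (le_max_right _ _)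
    refine lt_of_lt_of_le ?_ (qco_le_Qco (zeroset_mem hz) (by simpa using h))
    exact qco_pos (fun j hj => by simpa using hj)
  · exact lt_of_lt_of_le (by simpa using h) (le_max_left _ _)

/-- On the moment-angle complex, the denominator is identically 1. -/
lemma Dco_eq_one {K : Set (Finset (Fin m))} {z : Fin m → ℂ}
    (hz : z ∈ momentAngleComplex m K) (i : Fin m) : Dco K z i = 1 := by
  obtain ⟨hb, I, hI, hset⟩ := hz
  have habs : ∀ j, j ∉ I → ‖z j‖ = 1 := by
    intro j hj
    have : j ∉ {i | ‖z i‖ < 1} := by rw [hset]; simpa using hj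
    simp only [Set.mem_setOf_eq, not_lt] at this
    exact le_antisymm (hb j) this
  by_cases hi : ‖z i‖ < 1
  · -- then i ∈ I and qco I z = 1
    have hiI : i ∈ I := by
      have : i ∈ {i | ‖z i‖ < 1} := hi
      rwa [hset] at this
    have hq : qco I z = 1 := by
      refine le_antisymm (qco_le_one I z) ?_
      unfold qco
      refine (Finset.le_fold_min _).2 ⟨le_rfl, fun j hj => ?_⟩
      have := habs j (Finset.mem_compl.1 hj)
      simp [bco, this]
    have hQ : Qco K z i = 1 :=
      le_antisymm (Qco_le_one K z i) (hq ▸ qco_le_Qco hI hiI)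
    simp [Dco, hQ, max_eq_right (le_of_lt hi)]
  · have h1 : ‖z i‖ = 1 := le_antisymm (hb i) (not_lt.1 hi)
    simp [Dco, h1, max_eq_left (Qco_le_one K z i)]

lemma continuous_bco (j : Fin m) : Continuous (fun z : Fin m → ℂ => bco z j) :=
  ((continuous_norm.comp (continuous_apply j)).min continuous_const)

lemma continuous_qco (F : Finset (Fin m)) : Continuous (fun z : Fin m → ℂ => qco F z) := by
  classical
  unfold qco
  induction Fᶜ using Finset.induction_on with
  | empty => simpa using continuous_const
  | insert _ _ h ih =>
    simp only [Finset.fold_insert h]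
    exact (continuous_bco _).min ih

lemma continuous_Qco (K : Set (Finset (Fin m))) (i : Fin m) :
    Continuous (fun z : Fin m → ℂ => Qco K z i) := by
  classical
  unfold Qco
  induction facesAt K i using Finset.induction_on with
  | empty => simpa using continuous_const
  | insert _ _ h ih =>
    simp only [Finset.fold_insert h]
    exact (continuous_qco _).max ih

lemma continuous_Dco (K : Set (Finset (Fin m))) (i : Fin m) :
    Continuous (fun z : Fin m → ℂ => Dco K z i) :=
  (continuous_norm.comp (continuous_apply i)).max (continuous_Qco K i)

/-- All the auxiliary quantities are invariant under the torus action. -/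
lemma bco_mul {γ z : Fin m → ℂ} (hγ : ∀ i, ‖γ i‖ = 1) (j : Fin m) :
    bco (γ * z) j = bco z j := by
  simp [bco, Pi.mul_apply, norm_mul, hγ j]

lemma qco_mul {γ z : Fin m → ℂ} (hγ : ∀ i, ‖γ i‖ = 1) (F : Finset (Fin m)) :
    qco F (γ * z) = qco F z := by
  unfold qco
  congr 1
  funext j
  exact bco_mul hγ j

lemma Dco_mul (K : Set (Finset (Fin m))) {γ z : Fin m → ℂ}
    (hγ : ∀ i, ‖γ i‖ = 1) (i : Fin m) :
    Dco K (γ * z) i = Dco K z i := by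
  unfold Dco Qco
  have h1 : (fun F => qco F (γ * z)) = fun F => qco F z := funext (qco_mul hγ)
  rw [h1, Pi.mul_apply, norm_mul, hγ i, one_mul]

end Aux

/-- Theorem (he1): Z_K ⊆ U(K), and there is a T^m-equivariant strong deformation
retraction of U(K) onto Z_K. -/
theorem stmt3 (m : ℕ) (K : Set (Finset (Fin m)))
    (hK : ∀ I ∈ K, ∀ J ⊆ I, J ∈ K) (hempty : ∅ ∈ K)
    (hvert : ∀ i : Fin m, ({i} : Finset (Fin m)) ∈ K) :
    momentAngleComplex m K ⊆ coordComplement m K ∧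
    ∃ H : (Fin m → ℂ) × ℝ → (Fin m → ℂ),
      ContinuousOn H (coordComplement m K ×ˢ Set.Icc (0 : ℝ) 1) ∧
      (∀ z ∈ coordComplement m K, ∀ t ∈ Set.Icc (0 : ℝ) 1,
        H (z, t) ∈ coordComplement m K) ∧
      (∀ z ∈ coordComplement m K, H (z, 0) = z) ∧
      (∀ z ∈ coordComplement m K, H (z, 1) ∈ momentAngleComplex m K) ∧
      (∀ z ∈ momentAngleComplex m K, ∀ t ∈ Set.Icc (0 : ℝ) 1, H (z, t) = z) ∧
      (∀ γ : Fin m → ℂ, (∀ i, ‖γ i‖ = 1) →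
        ∀ z ∈ coordComplement m K, ∀ t ∈ Set.Icc (0 : ℝ) 1,
          H (γ * z, t) = γ * H (z, t)) := by
  classical
  have hZU : momentAngleComplex m K ⊆ coordComplement m K := by
    intro z hz
    obtain ⟨hb, I, hI, hset⟩ := hz
    refine mem_coordComplement.2 (fun J hJ => ?_)
    by_contra hc
    push_neg at hc
    -- then J ⊆ I, so J ∈ K, contradiction
    apply hJ
    refine hK I hI J (fun j hj => ?_)
    have : j ∈ {i | ‖z i‖ < 1} := by
      simp only [Set.mem_setOf_eq, hc j hj]
      simpa using zero_lt_one
    rwa [hset] at this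
  refine ⟨hZU, Hco K, ?_, ?_, ?_, ?_, ?_, ?_⟩
  -- continuity
  · rw [continuousOn_pi]
    intro i
    have hD : ContinuousOn (fun p : (Fin m → ℂ) × ℝ => (Dco K p.1 i)⁻¹)
        (coordComplement m K ×ˢ Set.Icc (0 : ℝ) 1) := by
      apply ContinuousOn.inv₀
      · exact ((continuous_Dco K i).comp continuous_fst).continuousOn
      · intro p hp
        exact ne_of_gt (Dco_pos hp.1 i)
    have h1 : ContinuousOn
        (fun p : (Fin m → ℂ) × ℝ => ((1 - p.2) + p.2 * (Dco K p.1 i)⁻¹ : ℝ))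
        (coordComplement m K ×ˢ Set.Icc (0 : ℝ) 1) := by
      exact ((continuous_const.sub continuous_snd).continuousOn).add
        ((continuous_snd.continuousOn).mul hD)
    exact ((continuous_apply i).comp continuous_fst).continuousOn.mul
      (Complex.continuous_ofReal.comp_continuousOn h1)
  -- stays in U(K)
  · intro z hz t ht
    refine mem_coordComplement.2 (fun I hI => ?_)
    obtain ⟨i, hi, hne⟩ := mem_coordComplement.1 hz I hI
    refine ⟨i, hi, ?_⟩
    have hfac : (0:ℝ) < (1 - t) + t * (Dco K z i)⁻¹ := by
      rcases eq_or_lt_of_le ht.1 with h0 | h0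
      · simp [← h0]
      · have : 0 < (Dco K z i)⁻¹ := inv_pos.2 (Dco_pos hz i)
        nlinarith [ht.2]
    simp only [Hco, mul_ne_zero_iff]
    exact ⟨hne, by exact_mod_cast ne_of_gt hfac⟩
  -- H(z,0) = z
  · intro z hz
    funext i
    simp [Hco]
  -- H(z,1) ∈ Z_K
  · intro z hz
    have hD := fun i => Dco_pos hz i
    have habs : ∀ i, ‖Hco K (z, 1) i‖ = ‖z i‖ * (Dco K z i)⁻¹ := by
      intro i
      simp only [Hco]
      rw [norm_mul, Complex.norm_real, Real.norm_eq_abs]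
      have he : ((1:ℝ) - 1) + 1 * (Dco K z i)⁻¹ = (Dco K z i)⁻¹ := by ring
      rw [he, abs_of_nonneg (inv_nonneg.2 (hD i).le)]
    constructor
    · intro i
      rw [habs i, ← div_eq_mul_inv]
      exact (div_le_one (hD i)).2 (abs_le_Dco K z i)
    · -- the set of small coordinates is T
      refine ⟨Finset.univ.filter (fun i => ‖z i‖ < Qco K z i), ?_, ?_⟩
      · -- T ∈ K
        set T := Finset.univ.filter (fun i => ‖z i‖ < Qco K z i) with hT
        rcases Finset.eq_empty_or_nonempty T with hTe | hTne
        · rw [hTe]; exact hempty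
        · obtain ⟨i0, hi0T, hmax⟩ := Finset.exists_max_image T
            (fun i => ‖z i‖) hTne
          have hi0 : ‖z i0‖ < Qco K z i0 := by
            simpa [hT] using hi0T
          -- find witness face
          have : ¬ Qco K z i0 ≤ ‖z i0‖ := not_le.2 hi0
          unfold Qco at this
          rw [Finset.fold_max_le] at this
          push_neg at this
          obtain ⟨F, hF, hqF⟩ := this (norm_nonneg _)
          simp only [facesAt, Finset.mem_filter] at hF
          obtain ⟨-, hFK, hi0F⟩ := hF
          refine hK F hFK T (fun k hkT => ?_)
          by_contra hkF
          have h1 : qco F z ≤ bco z k := qco_le_bco hkF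
          have h2 : ‖z k‖ < Qco K z k := by simpa [hT] using hkT
          have h3 : ‖z k‖ < 1 :=
            lt_of_lt_of_le h2 (Qco_le_one K z k)
          have h4 : bco z k = ‖z k‖ := min_eq_left (le_of_lt h3)
          have h5 : ‖z k‖ ≤ ‖z i0‖ := hmax k hkT
          rw [h4] at h1
          linarith
      · -- set equality
        ext i
        simp only [Set.mem_setOf_eq, Finset.coe_filter, Finset.mem_univ, true_and,
          Set.mem_setOf_eq]
        rw [habs i]
        constructor
        · intro h
          by_contra hc
          push_neg at hc
          have hDeq : Dco K z i = ‖z i‖ := max_eq_left hc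
          have hpos : 0 < ‖z i‖ := hDeq ▸ hD i
          rw [hDeq, mul_inv_cancel₀ (ne_of_gt hpos)] at h
          exact lt_irrefl _ h
        · intro h
          have hQpos : 0 < Qco K z i := lt_of_le_of_lt (norm_nonneg _) h
          have hDeq : Dco K z i = Qco K z i := max_eq_right (le_of_lt h)
          rw [hDeq, ← div_eq_mul_inv]
          exact (div_lt_one hQpos).2 h
  -- identity on Z_K
  · intro z hz t ht
    funext i
    simp [Hco, Dco_eq_one hz i]
  -- equivariance
  · intro γ hγ z hz t ht
    funext i
    simp only [Hco, Pi.mul_apply, Dco_mul K hγ]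
    ring
end

section
/- Let k be a field, let n ≤ m be positive integers, and let K be a simplicial complex on the set [m] = {1,…,m} all of whose members have at most n elements; let f_{j−1} denote the number of j-element members of K. Let I_K ⊆ k[v_1,…,v_m] be the ideal generated by the squarefree monomials v_{i_1}·v_{i_2}⋯v_{i_s} (i_1 < ⋯ < i_s) such that {i_1,…,i_s} ∉ K, and let k(K) = k[v_1,…,v_m]/I_K be the Stanley–Reisner ring. Then for every integer d ≥ 1, the k-vector subspace of k(K) spanned by the images of the homogeneous polynomials of degree d has dimension Σ_{j=1}^{n} f_{j−1}·binom(d−1, j−1). -/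
open MvPolynomial Finset

/-- Stars and bars: number of `j`-tuples of naturals summing to `e`. -/
private lemma aux_card_piAntidiag_univ (j e : ℕ) :
    (Finset.piAntidiag (Finset.univ : Finset (Fin j)) e).card = (j + e - 1).choose e := by
  classical
  rw [← Finset.map_sym_eq_piAntidiag, Finset.card_map]
  have h : (Finset.univ : Finset (Fin j)).sym e = Finset.univ := by
    ext m; simp
  rw [h, Finset.card_univ, Sym.card_sym_fin_eq_multichoose, Nat.multichoose_eq]

/-- Number of exponent vectors of total degree `d` with support exactly `S`. -/
private lemma aux_fiber (m d : ℕ) (hd : 1 ≤ d) (S : Finset (Fin m)) (hS : S.Nonempty) :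
    ((Finset.finsuppAntidiag (Finset.univ : Finset (Fin m)) d).filter
      (fun a => a.support = S)).card = (d - 1).choose (S.card - 1) := by
  classical
  set j := S.card with hj
  have hj1 : 1 ≤ j := Finset.card_pos.mpr hS
  by_cases hjd : j ≤ d
  · -- bijection with piAntidiag univ (d - j)
    have o : Fin j ≃o {x // x ∈ S} := S.orderIsoOfFin hj.symm
    have hcard : ((Finset.finsuppAntidiag (Finset.univ : Finset (Fin m)) d).filter
        (fun a => a.support = S)).card
        = (Finset.piAntidiag (Finset.univ : Finset (Fin j)) (d - j)).card := by
      refine Finset.card_bij' (fun a _ => fun i : Fin j => a (o i) - 1)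
        (fun f _ => (⟨S, fun x => if hx : x ∈ S then f (o.symm ⟨x, hx⟩) + 1 else 0,
          by intro x; by_cases hx : x ∈ S <;> simp [hx]⟩ : Fin m →₀ ℕ))
        ?_ ?_ ?_ ?_
      · -- maps into piAntidiag
        intro a ha
        rw [Finset.mem_filter, Finset.mem_finsuppAntidiag] at ha
        obtain ⟨⟨hsum, -⟩, hsupp⟩ := ha
        have hpos : ∀ i : Fin j, 1 ≤ a (o i) := by
          intro i
          have : ((o i : {x // x ∈ S}) : Fin m) ∈ a.support := by
            rw [hsupp]; exact (o i).2
          rw [Finsupp.mem_support_iff] at this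
          omega
        have hsum2 : ∑ i : Fin j, a (o i) = d := by
          have e1 : ∑ i : Fin j, a (o i) = ∑ x ∈ S.attach, a x :=
            Fintype.sum_equiv o.toEquiv _ _ (fun i => rfl)
          have e2 : ∑ x ∈ S.attach, a (x : Fin m) = ∑ x ∈ S, a x := Finset.sum_attach _ _
          have e3 : ∑ x ∈ S, a x = ∑ x ∈ Finset.univ, a x := by
            apply Finset.sum_subset (Finset.subset_univ S)
            intro x _ hx
            rw [← hsupp] at hx
            exact Finsupp.notMem_support_iff.mp hx
          rw [e1, e2, e3]; exact hsum
        rw [Finset.mem_piAntidiag]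
        refine ⟨?_, fun i _ => Finset.mem_univ i⟩
        show ∑ i : Fin j, (a (o i) - 1) = d - j
        have : ∑ i : Fin j, (a (o i) - 1) + ∑ _i : Fin j, 1 = ∑ i : Fin j, a (o i) := by
          rw [← Finset.sum_add_distrib]
          apply Finset.sum_congr rfl
          intro i _
          have := hpos i
          omega
        simp only [Finset.sum_const, Finset.card_univ, Fintype.card_fin, smul_eq_mul,
          mul_one] at this
        omega
      · -- maps into fiber
        intro f hf
        rw [Finset.mem_piAntidiag] at hf
        obtain ⟨hfsum, -⟩ := hf
        rw [Finset.mem_filter, Finset.mem_finsuppAntidiag]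
        refine ⟨⟨?_, Finset.subset_univ _⟩, rfl⟩
        show (∑ x : Fin m, if hx : x ∈ S then f (o.symm ⟨x, hx⟩) + 1 else 0) = d
        have e3 : (∑ x : Fin m, if hx : x ∈ S then f (o.symm ⟨x, hx⟩) + 1 else 0)
            = ∑ x ∈ S, (if hx : x ∈ S then f (o.symm ⟨x, hx⟩) + 1 else 0) := by
          symm
          apply Finset.sum_subset (Finset.subset_univ S)
          intro x _ hx
          rw [dif_neg hx]
        have e2 : (∑ x ∈ S, if hx : x ∈ S then f (o.symm ⟨x, hx⟩) + 1 else 0)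
            = ∑ x ∈ S.attach, (f (o.symm x) + 1) := by
          rw [← Finset.sum_attach S (fun x => if hx : x ∈ S then f (o.symm ⟨x, hx⟩) + 1 else 0)]
          apply Finset.sum_congr rfl
          intro x _
          rw [dif_pos x.2, Subtype.coe_eta]
        have e1 : ∑ x ∈ S.attach, (f (o.symm x) + 1) = ∑ i : Fin j, (f i + 1) := by
          symm
          apply Fintype.sum_equiv o.toEquiv
          intro i
          simp
        rw [e3, e2, e1]
        have hf' : ∑ i : Fin j, f i = d - j := hfsum
        have hsplit : ∑ i : Fin j, (f i + 1) = (∑ i : Fin j, f i) + j := by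
          rw [Finset.sum_add_distrib]
          simp
        omega
      · -- left inverse
        intro a ha
        rw [Finset.mem_filter, Finset.mem_finsuppAntidiag] at ha
        obtain ⟨-, hsupp⟩ := ha
        ext x
        simp only [Finsupp.coe_mk]
        by_cases hx : x ∈ S
        · simp only [dif_pos hx, OrderIso.apply_symm_apply]
          have : x ∈ a.support := by rw [hsupp]; exact hx
          rw [Finsupp.mem_support_iff] at this
          omega
        · simp only [dif_neg hx]
          have : x ∉ a.support := by rw [hsupp]; exact hx
          rw [Finsupp.notMem_support_iff] at this
          omega
      · -- right inverse
        intro f hf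
        funext i
        simp only [Finsupp.coe_mk, dif_pos (o i).2, Subtype.coe_eta,
          OrderIso.symm_apply_apply]
        omega
    rw [hcard, aux_card_piAntidiag_univ]
    have h1 : j + (d - j) - 1 = d - 1 := by omega
    have h2 : d - j = (d - 1) - (j - 1) := by omega
    rw [h1, h2, Nat.choose_symm (by omega)]
  · -- empty fiber
    have hempty : ((Finset.finsuppAntidiag (Finset.univ : Finset (Fin m)) d).filter
        (fun a => a.support = S)) = ∅ := by
      rw [Finset.filter_eq_empty_iff]
      intro a ha
      rw [Finset.mem_finsuppAntidiag] at ha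
      intro hsupp
      have hle : j ≤ ∑ x ∈ S, a x := by
        have h1 : ∑ _x ∈ S, 1 ≤ ∑ x ∈ S, a x := by
          apply Finset.sum_le_sum
          intro x hx
          have : x ∈ a.support := by rw [hsupp]; exact hx
          rw [Finsupp.mem_support_iff] at this
          omega
        simpa using h1
      have hle2 : ∑ x ∈ S, a x ≤ ∑ x ∈ Finset.univ, a x :=
        Finset.sum_le_sum_of_subset (Finset.subset_univ S)
      have hh : ∑ x ∈ Finset.univ, a x = d := ha.1
      omega
    rw [hempty, Finset.card_empty, Nat.choose_eq_zero_of_lt (by omega)]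

/-- Stanley's formula, finitary form: the degree-`d` graded component of the
Stanley–Reisner ring k(K) = k[v₁,…,v_m]/I_K has k-dimension
Σ_{j=1}^{n} f_{j−1}·C(d−1, j−1), for every d ≥ 1. -/
theorem stmt8 (k : Type) [Field k] (m n : ℕ) (hn : 1 ≤ n) (hnm : n ≤ m)
    (K : Finset (Finset (Fin m)))
    (hK : ∀ I ∈ K, ∀ J ⊆ I, J ∈ K) (hempty : ∅ ∈ K)
    (hdim : ∀ I ∈ K, I.card ≤ n)
    (d : ℕ) (hd : 1 ≤ d) :
    Module.finrank k
      (Submodule.map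
        (Ideal.Quotient.mkₐ k
          (Ideal.span ((fun s : Finset (Fin m) =>
            ∏ i ∈ s, (MvPolynomial.X i : MvPolynomial (Fin m) k)) ''
              {s : Finset (Fin m) | s ∉ K}))).toLinearMap
        (MvPolynomial.homogeneousSubmodule (Fin m) k d))
      = ∑ j ∈ Finset.Icc 1 n,
          (K.filter (fun I => I.card = j)).card * Nat.choose (d - 1) (j - 1) := by
  classical
  set I : Ideal (MvPolynomial (Fin m) k) :=
    Ideal.span ((fun s : Finset (Fin m) =>
      ∏ i ∈ s, (MvPolynomial.X i : MvPolynomial (Fin m) k)) ''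
        {s : Finset (Fin m) | s ∉ K}) with hI
  set π := Ideal.Quotient.mkₐ k I with hπ
  -- products of variables are monomials
  have hind_apply : ∀ (t : Finset (Fin m)) (x : Fin m),
      (∑ i ∈ t, Finsupp.single i (1 : ℕ)) x = if x ∈ t then 1 else 0 := by
    intro t x
    rw [Finsupp.finset_sum_apply]
    simp [Finsupp.single_apply]
  have hind_supp : ∀ t : Finset (Fin m),
      (∑ i ∈ t, Finsupp.single i (1 : ℕ)).support = t := by
    intro t
    ext x
    rw [Finsupp.mem_support_iff, hind_apply]
    split <;> simp_all
  have hprod : ∀ t : Finset (Fin m),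
      (∏ i ∈ t, (X i : MvPolynomial (Fin m) k))
        = monomial (∑ i ∈ t, Finsupp.single i 1) 1 := by
    intro t
    induction t using Finset.cons_induction with
    | empty => simp
    | cons a t ha ih =>
      rw [Finset.prod_cons, Finset.sum_cons, ih, X, monomial_mul, one_mul]
  -- Lemma A : bad monomials lie in I
  have memI : ∀ a : Fin m →₀ ℕ, a.support ∉ K → (monomial a (1 : k)) ∈ I := by
    intro a ha
    have hgen : (∏ i ∈ a.support, (X i : MvPolynomial (Fin m) k)) ∈ I :=
      Ideal.subset_span ⟨a.support, ha, rfl⟩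
    have ha_eq : a = a - (∑ i ∈ a.support, Finsupp.single i 1)
        + (∑ i ∈ a.support, Finsupp.single i 1) := by
      ext x
      rw [Finsupp.add_apply, Finsupp.tsub_apply, hind_apply]
      by_cases hx : x ∈ a.support
      · have : a x ≠ 0 := Finsupp.mem_support_iff.mp hx
        simp only [if_pos hx]
        omega
      · have : a x = 0 := Finsupp.notMem_support_iff.mp hx
        simp only [if_neg hx]
        omega
    have key : (monomial a (1 : k))
        = monomial (a - ∑ i ∈ a.support, Finsupp.single i 1) 1
          * ∏ i ∈ a.support, X i := by
      rw [hprod, monomial_mul, one_mul, ← ha_eq]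
    rw [key]
    exact Ideal.mul_mem_left _ _ hgen
  -- Lemma B : elements of I have zero coefficients on good monomials
  have coeffI : ∀ p ∈ I, ∀ a : Fin m →₀ ℕ, a.support ∈ K →
      MvPolynomial.coeff a p = 0 := by
    intro p hp
    refine Submodule.span_induction ?_ ?_ ?_ ?_ hp
    · rintro x ⟨s, hs, rfl⟩ a haK
      simp only [Set.mem_setOf_eq] at hs
      show MvPolynomial.coeff a (∏ i ∈ s, (X i : MvPolynomial (Fin m) k)) = 0
      rw [hprod s, coeff_monomial]
      split
      · next h =>
        exfalso
        apply hs
        have : s = a.support := by rw [← h, hind_supp]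
        rw [this]; exact haK
      · rfl
    · intro a _; simp
    · intro x y _ _ hx hy a ha
      rw [coeff_add, hx a ha, hy a ha, add_zero]
    · intro r x _ hx a ha
      rw [smul_eq_mul, coeff_mul]
      apply Finset.sum_eq_zero
      rintro ⟨b, c⟩ hbc
      rw [Finset.HasAntidiagonal.mem_antidiagonal] at hbc
      have hsub : c.support ⊆ a.support := by
        intro y hy
        rw [Finsupp.mem_support_iff] at hy ⊢
        have : b y + c y = a y := by rw [← hbc]; rfl
        omega
      have hcK : c.support ∈ K := hK _ ha _ hsub
      rw [hx c hcK, mul_zero]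
  -- the good monomials of degree d
  set T : Finset (Fin m →₀ ℕ) :=
    (Finset.finsuppAntidiag (Finset.univ : Finset (Fin m)) d).filter
      (fun a => a.support ∈ K) with hT
  have hTdeg : ∀ a ∈ T, Finsupp.degree a = d := by
    intro a ha
    rw [hT, Finset.mem_filter, Finset.mem_finsuppAntidiag] at ha
    rw [Finsupp.degree_apply]
    rw [show ∑ i ∈ a.support, a i = ∑ i ∈ Finset.univ, a i from
      Finset.sum_subset (Finset.subset_univ _)
        (fun x _ hx => Finsupp.notMem_support_iff.mp hx)]
    exact ha.1.1
  set v : {a // a ∈ T} → (MvPolynomial (Fin m) k ⧸ I) :=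
    fun a => π (monomial a.1 1) with hv
  -- the image equals the span of v
  have himage : Submodule.map π.toLinearMap (homogeneousSubmodule (Fin m) k d)
      = Submodule.span k (Set.range v) := by
    apply le_antisymm
    · rintro x ⟨p, hp, rfl⟩
      have hp' : MvPolynomial.IsHomogeneous p d := hp
      have hrep : π.toLinearMap p
          = ∑ a ∈ p.support, MvPolynomial.coeff a p • π (monomial a 1) := by
        rw [AlgHom.toLinearMap_apply]
        conv_lhs => rw [as_sum p]
        rw [map_sum]
        apply Finset.sum_congr rfl
        intro a _
        rw [← map_smul, smul_monomial, smul_eq_mul, mul_one]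
      rw [hrep]
      apply Submodule.sum_mem
      intro a haSup
      by_cases hKa : a.support ∈ K
      · have haT : a ∈ T := by
          rw [hT, Finset.mem_filter, Finset.mem_finsuppAntidiag]
          refine ⟨⟨?_, Finset.subset_univ _⟩, hKa⟩
          have hdeg : Finsupp.degree a = d := by
            rw [Finsupp.degree_eq_weight_one]
            exact hp' (MvPolynomial.mem_support_iff.mp haSup)
          rw [← hdeg, Finsupp.degree]
          exact (Finset.sum_subset (Finset.subset_univ _)
            (fun x _ hx => Finsupp.notMem_support_iff.mp hx)).symm
        exact Submodule.smul_mem _ _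
          (Submodule.subset_span ⟨⟨a, haT⟩, rfl⟩)
      · have : π (monomial a 1) = 0 := by
          rw [hπ, Ideal.Quotient.mkₐ_eq_mk, Ideal.Quotient.eq_zero_iff_mem]
          exact memI a hKa
        rw [this, smul_zero]
        exact Submodule.zero_mem _
    · rw [Submodule.span_le]
      rintro x ⟨a, rfl⟩
      refine ⟨monomial a.1 1, ?_, rfl⟩
      rw [SetLike.mem_coe, mem_homogeneousSubmodule]
      exact isHomogeneous_monomial 1 (hTdeg a.1 a.2)
  -- linear independence
  have hli : LinearIndependent k v := by
    rw [linearIndependent_iff']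
    intro s g hsum i hi
    set q : MvPolynomial (Fin m) k := ∑ a ∈ s, g a • monomial a.1 (1 : k) with hq
    have hπq : π q = 0 := by
      rw [hq, map_sum]
      have hterm : ∀ a ∈ s, π (g a • monomial a.1 (1:k)) = g a • v a :=
        fun a _ => map_smul π _ _
      rw [Finset.sum_congr rfl hterm]
      exact hsum
    have hqI : q ∈ I := by
      rw [hπ, Ideal.Quotient.mkₐ_eq_mk, Ideal.Quotient.eq_zero_iff_mem] at hπq
      exact hπq
    have hKi : (i.1 : Fin m →₀ ℕ).support ∈ K :=
      (Finset.mem_filter.mp i.2).2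
    have hco := coeffI q hqI i.1 hKi
    rw [hq, MvPolynomial.coeff_sum] at hco
    rw [Finset.sum_eq_single i ?_ ?_] at hco
    · rw [coeff_smul, coeff_monomial, if_pos rfl, smul_eq_mul, mul_one] at hco
      exact hco
    · intro a _ hne
      rw [coeff_smul, coeff_monomial, if_neg (fun h => hne (Subtype.ext h)), smul_zero]
    · intro h
      exact absurd hi h
  rw [himage, finrank_span_eq_card hli, Fintype.card_coe]
  -- counting
  have hTsum : T.card = ∑ S ∈ K.filter (fun S => S ≠ ∅), (d - 1).choose (S.card - 1) := by
    rw [Finset.card_eq_sum_card_fiberwise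
      (f := Finsupp.support) (t := K.filter (fun S => S ≠ ∅)) ?_]
    · apply Finset.sum_congr rfl
      intro S hS
      rw [Finset.mem_filter] at hS
      have hfib : T.filter (fun a => a.support = S)
          = (Finset.finsuppAntidiag (Finset.univ : Finset (Fin m)) d).filter
              (fun a => a.support = S) := by
        rw [hT, Finset.filter_filter]
        apply Finset.filter_congr
        intro a _
        constructor
        · rintro ⟨-, h⟩; exact h
        · intro h; exact ⟨by rw [h]; exact hS.1, h⟩
      rw [hfib, aux_fiber m d hd S (Finset.nonempty_iff_ne_empty.mpr hS.2)]
    · intro a haT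
      rw [Finset.mem_coe, Finset.mem_filter]
      have h1 : a.support ∈ K := by
        rw [Finset.mem_coe, hT, Finset.mem_filter] at haT
        exact haT.2
      refine ⟨h1, ?_⟩
      intro h
      have := hTdeg a haT
      rw [Finsupp.degree_apply, h] at this
      simp at this
      omega
  rw [hTsum]
  rw [← Finset.sum_fiberwise_of_maps_to (g := Finset.card) (t := Finset.Icc 1 n) ?_
    (fun S : Finset (Fin m) => (d - 1).choose (S.card - 1))]
  · apply Finset.sum_congr rfl
    intro j hj
    rw [Finset.mem_Icc] at hj
    have hset : ((K.filter fun S => S ≠ ∅).filter fun S => S.card = j)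
        = K.filter (fun I => I.card = j) := by
      rw [Finset.filter_filter]
      apply Finset.filter_congr
      intro S _
      constructor
      · rintro ⟨-, h⟩; exact h
      · intro h
        refine ⟨?_, h⟩
        intro he
        rw [he] at h
        simp at h
        omega
    rw [hset]
    have hcongr : ∑ S ∈ K.filter (fun I => I.card = j), (d - 1).choose (S.card - 1)
        = ∑ S ∈ K.filter (fun I => I.card = j), (d - 1).choose (j - 1) :=
      Finset.sum_congr rfl (fun S hS => by rw [(Finset.mem_filter.mp hS).2])
    rw [hcongr, Finset.sum_const, smul_eq_mul]
  · intro S hS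
    rw [Finset.mem_filter] at hS
    rw [Finset.mem_Icc]
    constructor
    · have : S.Nonempty := Finset.nonempty_iff_ne_empty.mpr hS.2
      have := Finset.card_pos.mpr this
      omega
    · exact hdim S hS.1
end

section
/- Let K be a simplicial complex on the set [m] = {1,…,m}. Let |K| = ⋃_{I∈K, I≠∅} conv{e_i : i ∈ I} ⊆ ℝ^m, where e_1,…,e_m is the standard basis of ℝ^m, and let cub(K) = ⋃ C_{I⊆J} ⊆ [0,1]^m, the union being over all pairs of subsets ∅ ≠ I ⊆ J with J ∈ K, where C_{I⊆J} = {y ∈ [0,1]^m : y_i = 0 for all i ∈ I, and y_i = 1 for all i ∉ J}. Then the subspaces |K| and cub(K) of ℝ^m are homeomorphic. -/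
/-- The geometric realization |K| ⊆ ℝ^m of a simplicial complex `K` on `[m]`. -/
def geomRealization (m : ℕ) (K : Set (Finset (Fin m))) : Set (Fin m → ℝ) :=
  ⋃ I ∈ {I : Finset (Fin m) | I ∈ K ∧ I.Nonempty},
    convexHull ℝ ((fun i => Pi.single i (1 : ℝ)) '' (I : Set (Fin m)))

/-- The cubical subcomplex cub(K) = ⋃_{∅≠I⊆J∈K} C_{I⊆J} of the cube [0,1]^m. -/
def cubK (m : ℕ) (K : Set (Finset (Fin m))) : Set (Fin m → ℝ) :=
  {y | ∃ I J : Finset (Fin m), I.Nonempty ∧ I ⊆ J ∧ J ∈ K ∧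
    (∀ i, 0 ≤ y i ∧ y i ≤ 1) ∧ (∀ i ∈ I, y i = 0) ∧ ∀ i, i ∉ J → y i = 1}

lemma mem_hull_iff (m : ℕ) (I : Finset (Fin m)) (x : Fin m → ℝ) :
    x ∈ convexHull ℝ ((fun i => Pi.single i (1 : ℝ)) '' (I : Set (Fin m))) ↔
      (∀ i, 0 ≤ x i) ∧ (∑ i, x i = 1) ∧ ∀ i ∉ I, x i = 0 := by
  constructor
  · intro hx
    have hconv : Convex ℝ {z : Fin m → ℝ |
        (∀ i, 0 ≤ z i) ∧ (∑ i, z i = 1) ∧ ∀ i ∉ I, z i = 0} := by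
      intro u hu v hv a b ha hb hab
      refine ⟨fun i => add_nonneg (mul_nonneg ha (hu.1 i)) (mul_nonneg hb (hv.1 i)), ?_, ?_⟩
      · simp only [Pi.add_apply, Pi.smul_apply, smul_eq_mul]
        rw [Finset.sum_add_distrib, ← Finset.mul_sum, ← Finset.mul_sum, hu.2.1, hv.2.1]
        simpa using hab
      · intro i hi
        simp [hu.2.2 i hi, hv.2.2 i hi]
    have hsub : ((fun i => Pi.single i (1 : ℝ)) '' (I : Set (Fin m))) ⊆
        {z : Fin m → ℝ | (∀ i, 0 ≤ z i) ∧ (∑ i, z i = 1) ∧ ∀ i ∉ I, z i = 0} := by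
      rintro _ ⟨i, hi, rfl⟩
      refine ⟨fun j => ?_, by simp, fun j hj => ?_⟩
      · rcases eq_or_ne j i with rfl | h
        · simp
        · simp [Pi.single_apply, h]
      · have : j ≠ i := by rintro rfl; exact hj hi
        simp [Pi.single_apply, this]
    exact convexHull_min hsub hconv hx
  · rintro ⟨h0, h1, hz⟩
    have hsumI : ∑ i ∈ I, x i = 1 :=
      (Finset.sum_subset (Finset.subset_univ I) (fun i _ hi => hz i hi)).trans h1
    have hx' : I.centerMass x (fun i => Pi.single i (1 : ℝ)) = x := by
      rw [Finset.centerMass, hsumI]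
      funext j
      simp only [inv_one, one_smul, one_mul, Finset.sum_apply, Pi.smul_apply, smul_eq_mul,
        Pi.single_apply]
      by_cases hj : j ∈ I
      · rw [Finset.sum_eq_single j]
        · simp
        · intro i _ hij; simp [hij.symm]
        · intro h; exact absurd hj h
      · rw [hz j hj]
        refine Finset.sum_eq_zero (f := fun i => x i * if j = i then (1:ℝ) else 0)
          fun i hi => ?_
        have : j ≠ i := by rintro rfl; exact hj hi
        simp [this]
    rw [← hx']
    exact Finset.centerMass_mem_convexHull _ (fun i _ => h0 i) (by rw [hsumI]; norm_num)
      (fun i hi => Set.mem_image_of_mem _ hi)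

lemma mem_geom_iff (m : ℕ) (K : Set (Finset (Fin m))) (x : Fin m → ℝ) :
    x ∈ geomRealization m K ↔ (∀ i, 0 ≤ x i) ∧ (∑ i, x i = 1) ∧
      ∃ J ∈ K, J.Nonempty ∧ ∀ i, x i ≠ 0 → i ∈ J := by
  constructor
  · intro hx
    rw [geomRealization, Set.mem_iUnion₂] at hx
    obtain ⟨I, ⟨hIK, hIne⟩, hxI⟩ := hx
    rw [mem_hull_iff] at hxI
    exact ⟨hxI.1, hxI.2.1, I, hIK, hIne, fun i hi => by
      by_contra h; exact hi (hxI.2.2 i h)⟩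
  · rintro ⟨h0, h1, J, hJK, hJne, hsupp⟩
    rw [geomRealization, Set.mem_iUnion₂]
    exact ⟨J, ⟨hJK, hJne⟩, (mem_hull_iff m J x).2 ⟨h0, h1, fun i hi => by
      by_contra h; exact hi (hsupp i h)⟩⟩

/-- Theorem: the subspaces |K| and cub(K) of ℝ^m are homeomorphic. -/
theorem stmt9 (m : ℕ) (K : Set (Finset (Fin m)))
    (hK : ∀ I ∈ K, ∀ J ⊆ I, J ∈ K) (hempty : ∅ ∈ K) :
    Nonempty (geomRealization m K ≃ₜ cubK m K) := by
  rcases Nat.eq_zero_or_pos m with hm | hm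
  · -- m = 0 : both sets are empty
    subst hm
    have hA : IsEmpty ↥(geomRealization 0 K) := by
      refine ⟨fun a => ?_⟩
      have := (mem_geom_iff 0 K a.1).1 a.2
      simpa using this.2.1
    have hB : IsEmpty ↥(cubK 0 K) := by
      refine ⟨fun b => ?_⟩
      obtain ⟨I, J, hIne, _⟩ := b.2
      obtain ⟨i, _⟩ := hIne
      exact i.elim0
    refine ⟨{ toEquiv := Equiv.equivOfIsEmpty _ _,
              continuous_toFun := ?_, continuous_invFun := ?_ }⟩
    · refine ⟨fun s _ => ?_⟩
      rw [Set.eq_empty_of_isEmpty (_ ⁻¹' s)]; exact isOpen_empty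
    · refine ⟨fun s _ => ?_⟩
      rw [Set.eq_empty_of_isEmpty (_ ⁻¹' s)]; exact isOpen_empty
  · haveI : Nonempty (Fin m) := ⟨⟨0, hm⟩⟩
    have hne : (Finset.univ : Finset (Fin m)).Nonempty := Finset.univ_nonempty
    set M : (Fin m → ℝ) → ℝ := fun x => Finset.univ.sup' hne x with hM_def
    set S : (Fin m → ℝ) → ℝ := fun y => ∑ j, (1 - y j) with hS_def
    set F : (Fin m → ℝ) → (Fin m → ℝ) := fun x i => 1 - x i / M x with hF_def
    set G : (Fin m → ℝ) → (Fin m → ℝ) := fun y i => (1 - y i) / S y with hG_def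
    -- positivity of M on |K|
    have hMpos : ∀ x ∈ geomRealization m K, 0 < M x := by
      intro x hx
      obtain ⟨h0, h1, -⟩ := (mem_geom_iff m K x).1 hx
      by_contra h
      push_neg at h
      have : ∑ i, x i ≤ 0 := by
        apply Finset.sum_nonpos
        intro i _
        exact le_trans (Finset.le_sup' x (Finset.mem_univ i)) h
      linarith
    have hSpos : ∀ y ∈ cubK m K, 0 < S y := by
      rintro y ⟨I, J, hIne, hIJ, hJK, hbd, hI0, hJ1⟩
      obtain ⟨i0, hi0⟩ := hIne
      apply Finset.sum_pos'
      · intro j _; linarith [(hbd j).2]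
      · exact ⟨i0, Finset.mem_univ i0, by rw [hI0 i0 hi0]; norm_num⟩
    have hFmem : ∀ x ∈ geomRealization m K, F x ∈ cubK m K := by
      intro x hx
      obtain ⟨h0, h1, J, hJK, hJne, hsupp⟩ := (mem_geom_iff m K x).1 hx
      have hMx := hMpos x hx
      obtain ⟨i0, -, hi0⟩ := Finset.exists_mem_eq_sup' hne x
      refine ⟨{i0}, J, Finset.singleton_nonempty i0, ?_, hJK, ?_, ?_, ?_⟩
      · intro i hi
        rw [Finset.mem_singleton] at hi
        subst hi
        exact hsupp i (by rw [← hi0]; exact hMx.ne')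
      · intro i
        have hle : x i ≤ M x := Finset.le_sup' x (Finset.mem_univ i)
        constructor
        · simp only [hF_def]
          have : x i / M x ≤ 1 := (div_le_one hMx).2 hle
          linarith
        · simp only [hF_def]
          have : 0 ≤ x i / M x := div_nonneg (h0 i) hMx.le
          linarith
      · intro i hi
        rw [Finset.mem_singleton] at hi
        subst hi
        simp only [hF_def, ← hi0]
        field_simp
        simp [hM_def]
      · intro i hi
        have : x i = 0 := by
          by_contra h; exact hi (hsupp i h)
        simp [hF_def, this]
    have hGmem : ∀ y ∈ cubK m K, G y ∈ geomRealization m K := by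
      intro y hy
      have hSy := hSpos y hy
      obtain ⟨I, J, hIne, hIJ, hJK, hbd, hI0, hJ1⟩ := hy
      rw [mem_geom_iff]
      refine ⟨fun i => div_nonneg (by linarith [(hbd i).2]) hSy.le, ?_, J, hJK,
        hIne.mono hIJ, ?_⟩
      · simp only [hG_def]
        rw [← Finset.sum_div, div_self hSy.ne']
      · intro i hi
        by_contra h
        apply hi
        simp [hG_def, hJ1 i h]
    have hGF : ∀ x ∈ geomRealization m K, G (F x) = x := by
      intro x hx
      obtain ⟨h0, h1, -⟩ := (mem_geom_iff m K x).1 hx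
      have hMx := hMpos x hx
      have hsum : S (F x) = 1 / M x := by
        simp only [hS_def, hF_def, sub_sub_cancel]
        rw [← Finset.sum_div, h1]
      funext i
      show (1 - F x i) / S (F x) = x i
      rw [hsum]
      simp only [hF_def, sub_sub_cancel]
      field_simp [hMx.ne']
    have hFG : ∀ y ∈ cubK m K, F (G y) = y := by
      intro y hy
      have hSy := hSpos y hy
      obtain ⟨I, J, hIne, hIJ, hJK, hbd, hI0, hJ1⟩ := hy
      obtain ⟨i0, hi0⟩ := hIne
      have hMG : M (G y) = 1 / S y := by
        apply le_antisymm
        · apply Finset.sup'_le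
          intro i _
          simp only [hG_def]
          gcongr
          linarith [(hbd i).1]
        · have := Finset.le_sup' (G y) (Finset.mem_univ i0)
          calc (1 : ℝ) / S y = G y i0 := by simp [hG_def, hI0 i0 hi0]
          _ ≤ M (G y) := this
      funext i
      show 1 - G y i / M (G y) = y i
      have h1' : S y ≠ 0 := hSy.ne'
      have hGi : G y i / M (G y) = 1 - y i := by
        rw [hMG]; simp only [hG_def]; field_simp
      rw [hGi]; ring
    exact ⟨{
      toFun := fun a => ⟨F a.1, hFmem a.1 a.2⟩
      invFun := fun b => ⟨G b.1, hGmem b.1 b.2⟩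
      left_inv := fun a => Subtype.ext (hGF a.1 a.2)
      right_inv := fun b => Subtype.ext (hFG b.1 b.2)
      continuous_toFun := by
        apply Continuous.subtype_mk
        apply continuous_pi
        intro i
        apply Continuous.sub continuous_const
        apply Continuous.div
        · exact (continuous_apply i).comp continuous_subtype_val
        · exact Continuous.finset_sup'_apply hne fun j _ =>
            (continuous_apply j).comp continuous_subtype_val
        · exact fun a => (hMpos a.1 a.2).ne'
      continuous_invFun := by
        apply Continuous.subtype_mk
        apply continuous_pi
        intro i
        apply Continuous.div
        · exact Continuous.sub continuous_const
            ((continuous_apply i).comp continuous_subtype_val)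
        · exact continuous_finset_sum _ fun j _ => Continuous.sub continuous_const
            ((continuous_apply j).comp continuous_subtype_val)
        · exact fun b => (hSpos b.1 b.2).ne' }⟩
end

section
/- Let K be a simplicial complex on the set [m] = {1,…,m}, let Z_K = {z ∈ ℂ^m : |z_i| ≤ 1 for all i, and {i : |z_i| < 1} ∈ K}, and let S = (s_{ij}) be an integer m×r matrix whose associated linear map ℤ^r → ℤ^m admits a left inverse (i.e. it is injective with image a direct summand of ℤ^m). For φ = (φ_1,…,φ_r) ∈ ℝ^r let t(φ) ∈ ℂ^m be the point with coordinates t(φ)_i = exp(2π√(−1)·(s_{i1}φ_1 + ⋯ + s_{ir}φ_r)), so that H = {t(φ) : φ ∈ ℝ^r} is an r-dimensional subtorus of T^m. Then H acts freely on Z_K (that is: whenever φ ∈ ℝ^r and z ∈ Z_K satisfy t(φ)_i·z_i = z_i for all i, one has t(φ)_i = 1 for all i) if and only if for every member I ∈ K the (m−#I)×r submatrix S_{Î} of S obtained by deleting the rows indexed by I defines a ℤ-linear map ℤ^r → ℤ^{m−#I} admitting a left inverse. -/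
/-- `exp (2πi c) = 1` iff the real number `c` is an integer. -/
lemma aux_exp_eq_one (c : ℝ) :
    Complex.exp (2 * Real.pi * Complex.I * (c : ℂ)) = 1 ↔ ∃ n : ℤ, c = n := by
  rw [Complex.exp_eq_one_iff]
  constructor
  · rintro ⟨n, hn⟩
    refine ⟨n, ?_⟩
    have h2 : (2 * Real.pi * Complex.I : ℂ) ≠ 0 := by
      simp [Real.pi_ne_zero, Complex.I_ne_zero]
    have : (c : ℂ) = (n : ℂ) := by
      have := hn
      have h' : (c : ℂ) * (2 * Real.pi * Complex.I) = (n : ℂ) * (2 * Real.pi * Complex.I) := by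
        rw [← this]; ring
      exact mul_right_cancel₀ h2 h'
    exact_mod_cast this
  · rintro ⟨n, hn⟩
    exact ⟨n, by rw [hn]; push_cast; ring⟩

/-- If `T * A = 1` over `ℤ` and `A φ` is integral for a real vector `φ`, then `φ` is
integral. -/
lemma aux_int_of_leftInverse {r : ℕ} {ι : Type} [Fintype ι]
    (A : Matrix ι (Fin r) ℤ) (T : Matrix (Fin r) ι ℤ) (hT : T * A = 1)
    (φ : Fin r → ℝ) (hφ : ∀ i, ∃ n : ℤ, ∑ j, (A i j : ℝ) * φ j = n) :
    ∀ j, ∃ n : ℤ, φ j = n := by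
  classical
  choose n hn using hφ
  intro j
  refine ⟨∑ i, T j i * n i, ?_⟩
  let c : ℤ →+* ℝ := Int.castRingHom ℝ
  have hTA : (T.map c) * (A.map c) = 1 := by
    rw [← Matrix.map_mul, hT, Matrix.map_one c c.map_zero c.map_one]
  have hv : (A.map c).mulVec φ = fun i => (n i : ℝ) := by
    funext i
    simpa [Matrix.mulVec, dotProduct, Matrix.map_apply, c] using hn i
  have h1 : (T.map c).mulVec ((A.map c).mulVec φ) = φ := by
    rw [Matrix.mulVec_mulVec, hTA, Matrix.one_mulVec]
  have h2 := congrFun h1 j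
  rw [hv] at h2
  rw [← h2]
  simp [Matrix.mulVec, dotProduct, Matrix.map_apply, c]

/-- Key algebra lemma: if the integer matrix `A` has the property that any real vector `φ`
with `A φ` integral is itself integral, then `A` admits an integer left inverse. -/
lemma aux_split {r : ℕ} {ι : Type} [Fintype ι] [DecidableEq ι]
    (A : Matrix ι (Fin r) ℤ)
    (h : ∀ φ : Fin r → ℝ, (∀ i, ∃ n : ℤ, ∑ j, (A i j : ℝ) * φ j = n) →
      ∀ j, ∃ n : ℤ, φ j = n) :
    ∃ T : Matrix (Fin r) ι ℤ, T * A = 1 := by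
  classical
  set p : (Fin r → ℤ) →ₗ[ℤ] (ι → ℤ) := Matrix.toLin' A with hp
  have hmv : ∀ (x : Fin r → ℤ) (i : ι), p x i = ∑ j, A i j * x j := by
    intro x i
    simp [hp, Matrix.toLin'_apply, Matrix.mulVec, dotProduct]
  -- injectivity
  have hinj : Function.Injective p := by
    rw [injective_iff_map_eq_zero]
    intro x hx
    funext j
    have := h (fun j => (x j : ℝ) * Real.sqrt 2) ?_ j
    · obtain ⟨n, hnn⟩ := this
      by_contra hxj
      have hx0 : (x j : ℝ) ≠ 0 := by exact_mod_cast fun h0 => hxj (by exact_mod_cast h0)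
      have : Real.sqrt 2 = ((n : ℚ) / (x j : ℚ) : ℚ) := by
        push_cast
        field_simp at hnn ⊢
        linarith [hnn]
      exact irrational_sqrt_two ⟨_, this.symm⟩
    · intro i
      refine ⟨0, ?_⟩
      have h0 : (∑ j, (A i j : ℝ) * x j) = 0 := by
        have h' : (∑ j, A i j * x j) = 0 := by
          have := congrFun hx i
          rw [hmv] at this
          simpa using this
        calc (∑ j, (A i j : ℝ) * x j) = ((∑ j, A i j * x j : ℤ) : ℝ) := by push_cast; rfl
          _ = 0 := by rw [h']; norm_num
      calc ∑ j, (A i j : ℝ) * ((x j : ℝ) * Real.sqrt 2)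
          = (∑ j, (A i j : ℝ) * x j) * Real.sqrt 2 := by rw [Finset.sum_mul]; exact Finset.sum_congr rfl fun j _ => by ring
        _ = 0 := by rw [h0]; ring
        _ = ((0 : ℤ) : ℝ) := by norm_num
  -- torsion-free cokernel
  set N := LinearMap.range p with hN
  have htf : ∀ (k : ℤ) (v : ι → ℤ), k ≠ 0 → k • v ∈ N → v ∈ N := by
    intro k v hk ⟨u, hu⟩
    have hφ := h (fun j => (u j : ℝ) / k) ?_
    · choose w hw using hφ
      refine ⟨w, ?_⟩
      have huw : u = k • w := by
        funext j
        have := hw j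
        have hk' : (k : ℝ) ≠ 0 := by exact_mod_cast hk
        field_simp at this
        rw [Pi.smul_apply, smul_eq_mul]
        exact_mod_cast this
      have : p u = k • p w := by rw [huw, map_smul]
      rw [hu] at this
      exact ((smul_right_injective (ι → ℤ) hk) this).symm
    · intro i
      refine ⟨v i, ?_⟩
      have hk' : (k : ℝ) ≠ 0 := by exact_mod_cast hk
      have hui : (∑ j, (A i j : ℝ) * u j) = k * v i := by
        have := congrFun hu i
        rw [hmv] at this
        have : ((∑ j, A i j * u j : ℤ) : ℝ) = ((k * v i : ℤ) : ℝ) := by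
          rw [this]; simp [Pi.smul_apply, smul_eq_mul]
        push_cast at this
        exact this
      calc ∑ j, (A i j : ℝ) * ((u j : ℝ) / k)
          = (∑ j, (A i j : ℝ) * u j) / k := by
            rw [Finset.sum_div]
            exact Finset.sum_congr rfl fun j _ => (mul_div_assoc _ _ _).symm
        _ = (k * v i) / k := by rw [hui]
        _ = v i := by field_simp
  -- the quotient is finite and torsion-free, hence free, hence projective
  have hQtf : NoZeroSMulDivisors ℤ ((ι → ℤ) ⧸ N) := by
    constructor
    intro k q hq
    by_cases hk : k = 0
    · exact Or.inl hk
    · right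
      obtain ⟨v, rfl⟩ := Submodule.mkQ_surjective N q
      have : N.mkQ (k • v) = 0 := by rw [map_smul]; exact hq
      have hkv : k • v ∈ N := (Submodule.Quotient.mk_eq_zero N).mp this
      exact (Submodule.Quotient.mk_eq_zero N).mpr (htf k v hk hkv)
  have : Module.Free ℤ ((ι → ℤ) ⧸ N) := Module.free_of_finite_type_torsion_free'
  obtain ⟨s, hs⟩ := Module.projective_lifting_property N.mkQ
    (LinearMap.id : ((ι → ℤ) ⧸ N) →ₗ[ℤ] ((ι → ℤ) ⧸ N)) (Submodule.mkQ_surjective N)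
  -- build the retraction
  set d : (ι → ℤ) →ₗ[ℤ] (ι → ℤ) := LinearMap.id - s ∘ₗ N.mkQ with hd
  have hdmem : ∀ x, d x ∈ N := by
    intro x
    have : N.mkQ (d x) = 0 := by
      simp only [hd, LinearMap.sub_apply, LinearMap.id_apply, LinearMap.comp_apply, map_sub]
      have := congrFun (congrArg DFunLike.coe hs) (N.mkQ x)
      simp only [LinearMap.comp_apply, LinearMap.id_apply] at this
      rw [this, sub_self]
    exact (Submodule.Quotient.mk_eq_zero N).mp this
  set e := LinearEquiv.ofInjective p hinj with he
  set g : (ι → ℤ) →ₗ[ℤ] (Fin r → ℤ) :=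
    e.symm.toLinearMap ∘ₗ (d.codRestrict N hdmem) with hg
  have hgp : g ∘ₗ p = LinearMap.id := by
    apply LinearMap.ext
    intro y
    simp only [LinearMap.comp_apply, LinearMap.id_apply]
    have hdpy : d (p y) = p y := by
      simp only [hd, LinearMap.sub_apply, LinearMap.id_apply, LinearMap.comp_apply]
      have : N.mkQ (p y) = 0 := (Submodule.Quotient.mk_eq_zero N).mpr ⟨y, rfl⟩
      rw [this, map_zero, sub_zero]
    have : (d.codRestrict N hdmem) (p y) = e y := by
      apply Subtype.ext
      simp only [LinearMap.codRestrict_apply, hdpy]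
      exact (LinearEquiv.ofInjective_apply p (h := hinj) y).symm
    simp only [hg, LinearMap.comp_apply, this]
    exact e.symm_apply_apply y
  refine ⟨LinearMap.toMatrix' g, ?_⟩
  have : A = LinearMap.toMatrix' p := (LinearMap.toMatrix'_toLin' A).symm
  rw [this, ← LinearMap.toMatrix'_comp, hgp, LinearMap.toMatrix'_id]

/-- Lemma (free): the r-dimensional subtorus of T^m determined by an integer m×r matrix
`S` (whose associated map ℤ^r → ℤ^m is a split monomorphism) acts freely on the
moment-angle complex Z_K if and only if for every member `I ∈ K` the submatrix of `S`
obtained by deleting the rows indexed by `I` defines a split monomorphism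
ℤ^r → ℤ^{m−#I}. -/
theorem stmt15 (m r : ℕ) (K : Set (Finset (Fin m)))
    (hK : ∀ I ∈ K, ∀ J ⊆ I, J ∈ K) (hempty : ∅ ∈ K)
    (S : Matrix (Fin m) (Fin r) ℤ)
    (hS : ∃ T : Matrix (Fin r) (Fin m) ℤ, T * S = 1) :
    (∀ (φ : Fin r → ℝ) (z : Fin m → ℂ),
      ((∀ i, ‖z i‖ ≤ 1) ∧
        ∃ I ∈ K, {i | ‖z i‖ < 1} = (I : Set (Fin m))) →
      (∀ i, Complex.exp (2 * Real.pi * Complex.I * ∑ j, (S i j : ℂ) * (φ j : ℂ)) * z i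
        = z i) →
      (∀ i, Complex.exp (2 * Real.pi * Complex.I * ∑ j, (S i j : ℂ) * (φ j : ℂ)) = 1))
    ↔
    (∀ I ∈ K, ∃ T : Matrix (Fin r) {i : Fin m // i ∉ I} ℤ,
      T * Matrix.of (fun (i : {i : Fin m // i ∉ I}) (j : Fin r) => S i.val j) = 1) := by
  classical
  obtain ⟨T₀, hT₀⟩ := hS
  have hc : ∀ (φ : Fin r → ℝ) (i : Fin m),
      (∑ j, (S i j : ℂ) * (φ j : ℂ)) = ((∑ j, (S i j : ℝ) * φ j : ℝ) : ℂ) := by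
    intro φ i; push_cast; rfl
  constructor
  · -- freeness implies per-face split mono
    intro H I hI
    apply aux_split
    intro φ hφ
    set z : Fin m → ℂ := fun i => if i ∈ I then 0 else 1 with hz
    have hmem : (∀ i, ‖z i‖ ≤ 1) ∧
        ∃ I' ∈ K, {i | ‖z i‖ < 1} = (I' : Set (Fin m)) := by
      constructor
      · intro i; by_cases hi : i ∈ I <;> simp [hz, hi]
      · refine ⟨I, hI, ?_⟩
        ext i
        by_cases hi : i ∈ I <;> simp [hz, hi]
    have hfix : ∀ i, Complex.exp (2 * Real.pi * Complex.I *
        ∑ j, (S i j : ℂ) * (φ j : ℂ)) * z i = z i := by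
      intro i
      by_cases hi : i ∈ I
      · simp [hz, hi]
      · have := hφ ⟨i, hi⟩
        obtain ⟨n, hn⟩ := this
        have : Complex.exp (2 * Real.pi * Complex.I *
            ∑ j, (S i j : ℂ) * (φ j : ℂ)) = 1 := by
          rw [hc]
          exact (aux_exp_eq_one _).mpr ⟨n, hn⟩
        simp [hz, hi, this]
    have hall := H φ z hmem hfix
    -- from hall : all coordinates integral, conclude φ integral using T₀
    have hSφ : ∀ i, ∃ n : ℤ, ∑ j, (S i j : ℝ) * φ j = n := by
      intro i
      have := hall i
      rw [hc] at this
      exact (aux_exp_eq_one _).mp this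
    exact aux_int_of_leftInverse S T₀ hT₀ φ hSφ
  · -- per-face split mono implies freeness
    intro h φ z ⟨hz1, I, hI, hIz⟩ hfix i
    -- for i ∉ I one has z i ≠ 0, hence exp = 1 there
    have hout : ∀ i : Fin m, i ∉ I → ∃ n : ℤ, ∑ j, (S i j : ℝ) * φ j = n := by
      intro i hi
      have hzi : z i ≠ 0 := by
        intro h0
        have : ‖z i‖ < 1 := by rw [h0]; simp
        have : i ∈ (I : Set (Fin m)) := hIz ▸ this
        exact hi this
      have hexp : Complex.exp (2 * Real.pi * Complex.I *
          ∑ j, (S i j : ℂ) * (φ j : ℂ)) = 1 := by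
        have h1 : Complex.exp (2 * Real.pi * Complex.I *
            ∑ j, (S i j : ℂ) * (φ j : ℂ)) * z i = 1 * z i := by
          rw [one_mul]; exact hfix i
        exact mul_right_cancel₀ hzi h1
      rw [hc] at hexp
      exact (aux_exp_eq_one _).mp hexp
    obtain ⟨T, hT⟩ := h I hI
    have hφint : ∀ j, ∃ n : ℤ, φ j = n := by
      apply aux_int_of_leftInverse _ T hT φ
      intro i
      exact hout i.val i.prop
    choose w hw using hφint
    rw [hc]
    apply (aux_exp_eq_one _).mpr
    refine ⟨∑ j, S i j * w j, ?_⟩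
    push_cast
    exact Finset.sum_congr rfl fun j _ => by rw [hw j]
end

section
/- Let n ≤ m be positive integers and let K be a simplicial complex on the set [m] = {1,…,m} all of whose members have at most n elements. Let f_{j−1} be the number of j-element members of K (f_{−1} = 1), let h_k = Σ_{i=0}^{k} (−1)^{k−i}·binom(n−i, k−i)·f_{i−1} for 0 ≤ k ≤ n, and for 0 ≤ p ≤ m set χ_p = Σ_{j=0}^{p} (−1)^{p−j}·f_{j−1}·binom(m−j, p−j). Then the following identity of polynomials in ℤ[t] holds: Σ_{p=0}^{m} (χ_p − (−1)^p·binom(m,p))·t^{2p} = (1 − t²)^{m−n}·(h_0 + h_1 t² + ⋯ + h_n t^{2n}) − (1 − t²)^m. -/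
open Polynomial Finset

/-!
Substituting `(1 - t²)^(N - j) = ∑_q (-1)^q C(N - j, q) t^(2q)` shows that both the generating
polynomial of the `χ_p` and that of the `h_k` are instances of
`∑_j f_j t^(2j) (1 - t²)^(N - j)`, with `N = m` and `N = n` respectively. Since `f_j = 0` for
`j > n`, the first is `(1 - t²)^(m - n)` times the second, and the term `(-1)^p C(m, p)` sums to
`(1 - t²)^m`.
-/

variable {R : Type*} [CommRing R]

lemma one_sub_X_sq_pow (d : ℕ) :
    ((1 : R[X]) - X ^ 2) ^ d
      = ∑ q ∈ range (d + 1), C ((-1 : R) ^ q * (d.choose q : R)) * X ^ (2 * q) := by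
  rw [sub_eq_add_neg, add_comm, add_pow]
  refine sum_congr rfl fun q _ => ?_
  rw [one_pow, mul_one, neg_pow, pow_mul]
  simp only [map_mul, map_pow, map_neg, map_one, map_natCast]
  ring

noncomputable def hPoly (N : ℕ) (f : ℕ → R) : R[X] :=
  ∑ j ∈ range (N + 1), C (f j) * X ^ (2 * j) * (1 - X ^ 2) ^ (N - j)

lemma sum_alternating_choose_mul_X_pow_eq_hPoly (N : ℕ) (f : ℕ → R) :
    ∑ p ∈ range (N + 1),
        C (∑ j ∈ range (p + 1), (-1 : R) ^ (p - j) * f j * ((N - j).choose (p - j) : R))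
          * X ^ (2 * p)
      = hPoly N f := by
  simp_rw [map_sum, sum_mul, range_eq_Ico]
  rw [← sum_Ico_Ico_comm, hPoly, range_eq_Ico]
  refine sum_congr rfl fun j hj => ?_
  rw [mem_Ico] at hj
  rw [sum_Ico_eq_sum_range, one_sub_X_sq_pow, show N + 1 - j = N - j + 1 by omega, mul_sum]
  refine sum_congr rfl fun q _ => ?_
  rw [Nat.add_sub_cancel_left, mul_add, pow_add]
  simp only [map_mul]
  ring

lemma hPoly_eq_one_sub_X_sq_pow_mul_hPoly {m n : ℕ} (hnm : n ≤ m) {f : ℕ → R}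
    (hf : ∀ j, n < j → f j = 0) :
    hPoly m f = (1 - X ^ 2) ^ (m - n) * hPoly n f := by
  have hsupp : ∀ j ∈ range (m + 1), j ∉ range (n + 1) →
      C (f j) * X ^ (2 * j) * (1 - X ^ 2) ^ (m - j) = 0 := fun j _ hj => by
    rw [hf j (by simpa using hj), map_zero, zero_mul, zero_mul]
  rw [hPoly, hPoly, mul_sum, ← sum_subset (range_subset_range.2 (by omega)) hsupp]
  refine sum_congr rfl fun i hi => ?_
  rw [mem_range] at hi
  rw [show m - i = (m - n) + (n - i) by omega, pow_add]
  ring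

theorem stmt17_general (m n : ℕ) (hnm : n ≤ m)
    (K : Finset (Finset (Fin m)))
    (hdim : ∀ I ∈ K, I.card ≤ n)
    (f : ℕ → ℤ)
    (hf : ∀ j, f j = ((K.filter (fun I => I.card = j)).card : ℤ))
    (h : ℕ → ℤ)
    (hh : ∀ k, h k = ∑ i ∈ Finset.range (k + 1),
      (-1 : ℤ) ^ (k - i) * (Nat.choose (n - i) (k - i) : ℤ) * f i)
    (χ : ℕ → ℤ)
    (hχ : ∀ p, χ p = ∑ j ∈ Finset.range (p + 1),
      (-1 : ℤ) ^ (p - j) * f j * (Nat.choose (m - j) (p - j) : ℤ)) :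
    ∑ p ∈ Finset.range (m + 1),
        C (χ p - (-1 : ℤ) ^ p * (Nat.choose m p : ℤ)) * X ^ (2 * p)
      = (1 - X ^ 2) ^ (m - n) *
          (∑ k ∈ Finset.range (n + 1), C (h k) * X ^ (2 * k))
        - (1 - X ^ 2) ^ m := by
  have hf_vanish : ∀ j, n < j → f j = 0 := fun j hj => by
    rw [hf, Nat.cast_eq_zero, card_eq_zero, filter_eq_empty_iff]
    exact fun I hI hcard => absurd (hdim I hI) (by omega)
  have hχ_poly : ∑ p ∈ range (m + 1), C (χ p) * X ^ (2 * p) = hPoly m f := by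
    simp_rw [hχ]
    exact sum_alternating_choose_mul_X_pow_eq_hPoly m f
  have hh_poly : ∑ k ∈ range (n + 1), C (h k) * X ^ (2 * k) = hPoly n f := by
    simp_rw [hh, mul_right_comm _ (_ : ℤ) (f _)]
    exact sum_alternating_choose_mul_X_pow_eq_hPoly n f
  simp_rw [map_sub, sub_mul]
  rw [sum_sub_distrib, hχ_poly, hh_poly, one_sub_X_sq_pow m,
    hPoly_eq_one_sub_X_sq_pow_mul_hPoly hnm hf_vanish]

/-- Theorem (rgp): χ(Z_K, T^m; t) = (1−t²)^{m−n}(h₀ + h₁t² + ⋯ + hₙt^{2n}) − (1−t²)^m,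
where χ_p(Z_K, T^m) = χ_p − (−1)^p·C(m,p). -/
theorem stmt17 (m n : ℕ) (hn : 1 ≤ n) (hnm : n ≤ m)
    (K : Finset (Finset (Fin m)))
    (hK : ∀ I ∈ K, ∀ J ⊆ I, J ∈ K) (hempty : ∅ ∈ K)
    (hdim : ∀ I ∈ K, I.card ≤ n)
    (f : ℕ → ℤ)
    (hf : ∀ j, f j = ((K.filter (fun I => I.card = j)).card : ℤ))
    (h : ℕ → ℤ)
    (hh : ∀ k, h k = ∑ i ∈ Finset.range (k + 1),
      (-1 : ℤ) ^ (k - i) * (Nat.choose (n - i) (k - i) : ℤ) * f i)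
    (χ : ℕ → ℤ)
    (hχ : ∀ p, χ p = ∑ j ∈ Finset.range (p + 1),
      (-1 : ℤ) ^ (p - j) * f j * (Nat.choose (m - j) (p - j) : ℤ)) :
    ∑ p ∈ Finset.range (m + 1),
        C (χ p - (-1 : ℤ) ^ p * (Nat.choose m p : ℤ)) * X ^ (2 * p)
      = (1 - X ^ 2) ^ (m - n) *
          (∑ k ∈ Finset.range (n + 1), C (h k) * X ^ (2 * k))
        - (1 - X ^ 2) ^ m :=
  stmt17_general m n hnm K hdim f hf h hh χ hχ
end
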